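/- arXiv:2105.07121 — 8 statements merged into one kernel-verified Lean document; each statement's English description precedes it below -/
import Mathlib

section
/- Let z ∈ ℝ^n have at least s indices i with z_i > 0, let z↓ denote the nonincreasing rearrangement of the entries of z (so z↓_s is the s-th largest entry of z), and define the index sets α := {i : z_i > z↓_s and z_i > 0}, β := {i : z_i = z↓_s and z_i > 0}, γ := {i : 0 < z_i < z↓_s}, τ := {i : z_i ≤ 0}. Then Π^B_{Ω_s}(z) is exactly the set of vectors x ∈ ℝ^n for which there exists a subset β₁ ⊆ β with |β₁| = s − |α| such that x_i = z_i for every i ∈ α ∪ β₁ ∪ τ and x_i = 0 for every i ∈ (β \ β₁) ∪ γ. -/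
open scoped BigOperators

noncomputable section

/-- `Omega n s` is the set `Ω_s = {x ∈ ℝ^n : #{i : x_i > 0} ≤ s}`. -/
def Omega (n s : ℕ) : Set (EuclideanSpace ℝ (Fin n)) :=
  {x | (Finset.univ.filter fun i => 0 < x i).card ≤ s}

/-- `projSet n s z` is the set `Π^B_{Ω_s}(z)` of Euclidean projections of `z` onto `Ω_s`. -/
def projSet (n s : ℕ) (z : EuclideanSpace ℝ (Fin n)) : Set (EuclideanSpace ℝ (Fin n)) :=
  {x | x ∈ Omega n s ∧ ‖z - x‖ = Metric.infDist z (Omega n s)}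

/-- The nonincreasing rearrangement of a vector `z ∈ ℝ^n`:
`descSort n z 0 ≥ descSort n z 1 ≥ ⋯ ≥ descSort n z (n-1)`. -/
noncomputable def descSort (n : ℕ) (z : Fin n → ℝ) : Fin n → ℝ :=
  fun i => z (Tuple.sort (fun j => -z j) i)

lemma sort_facts (n s : ℕ) (hs : 0 < s) (hsn : s ≤ n) (z : Fin n → ℝ)
    (zs : ℝ) (hzs : zs = descSort n z ⟨s - 1, by omega⟩) :
    (Finset.univ.filter fun i => zs < z i).card < s ∧
    s ≤ (Finset.univ.filter fun i => zs ≤ z i).card := by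
  set σ := Tuple.sort (fun j => -z j) with hσ
  have anti : ∀ i j : Fin n, i ≤ j → z (σ j) ≤ z (σ i) := by
    intro i j hij
    have := Tuple.monotone_sort (fun j => -z j) hij
    simpa using this
  have hks : s - 1 < n := by omega
  constructor
  · have : (Finset.univ.filter fun i => zs < z i).card ≤ (Finset.range (s-1)).card := by
      apply Finset.card_le_card_of_injOn (fun i => ((σ.symm i : Fin n) : ℕ))
      · intro i hi
        simp only [Finset.mem_coe, Finset.mem_filter, Finset.mem_univ, true_and] at hi
        simp only [Finset.mem_coe, Finset.mem_range]
        by_contra hge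
        push_neg at hge
        have hle : (⟨s-1, hks⟩ : Fin n) ≤ σ.symm i := by
          exact Fin.mk_le_of_le_val hge
        have := anti _ _ hle
        rw [Equiv.apply_symm_apply] at this
        rw [hzs] at hi
        simp only [descSort] at hi
        exact absurd (lt_of_lt_of_le hi this) (lt_irrefl _)
      · intro a _ b _ hab
        exact σ.symm.injective (Fin.val_injective hab)
    have := Finset.card_range (s-1)
    omega
  · have : (Finset.range s).card ≤ (Finset.univ.filter fun i => zs ≤ z i).card := by
      apply Finset.card_le_card_of_injOn (fun k => (σ ⟨k % n, Nat.mod_lt _ (by omega)⟩ : Fin n))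
      · intro k hk
        simp only [Finset.mem_coe, Finset.mem_range] at hk
        have hkn : k < n := lt_of_lt_of_le hk hsn
        have hmod : k % n = k := Nat.mod_eq_of_lt hkn
        simp only [Finset.mem_coe, Finset.mem_filter, Finset.mem_univ, true_and]
        rw [hzs]
        simp only [descSort]
        apply anti
        rw [Fin.le_def]
        simp only [hmod]
        omega
      · intro a ha b hb hab
        simp only [Finset.coe_range, Set.mem_Iio] at ha hb
        have h2 : (⟨a % n, _⟩ : Fin n) = ⟨b % n, _⟩ := σ.injective hab
        have h3 := congrArg Fin.val h2
        simp only at h3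
        rwa [Nat.mod_eq_of_lt (lt_of_lt_of_le ha hsn), Nat.mod_eq_of_lt (lt_of_lt_of_le hb hsn)] at h3
    simpa using this

lemma core_ineq (n s : ℕ) (z : Fin n → ℝ) (zs : ℝ) (hzs : 0 < zs)
    (α β γ : Finset (Fin n))
    (hα : ∀ i, i ∈ α ↔ zs < z i)
    (hβ : ∀ i, i ∈ β ↔ z i = zs)
    (hγ : ∀ i, i ∈ γ ↔ 0 < z i ∧ z i < zs)
    (P : Finset (Fin n)) (hP : P ⊆ α ∪ β ∪ γ) (hPs : P.card ≤ s) :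
    (∑ i ∈ γ, z i ^ 2 + ((β.card : ℝ) - ((s : ℝ) - α.card)) * zs ^ 2
      ≤ ∑ i ∈ (α ∪ β ∪ γ) \ P, z i ^ 2) ∧
    (∑ i ∈ (α ∪ β ∪ γ) \ P, z i ^ 2
      ≤ ∑ i ∈ γ, z i ^ 2 + ((β.card : ℝ) - ((s : ℝ) - α.card)) * zs ^ 2 →
      α ⊆ P ∧ P ∩ γ = ∅ ∧ P.card = s) := by
  have dαβ : Disjoint α β := by
    rw [Finset.disjoint_left]; intro i hi hi'
    rw [hα] at hi; rw [hβ] at hi'; linarith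
  have dαγ : Disjoint α γ := by
    rw [Finset.disjoint_left]; intro i hi hi'
    rw [hα] at hi; rw [hγ] at hi'; linarith [hi'.2]
  have dβγ : Disjoint β γ := by
    rw [Finset.disjoint_left]; intro i hi hi'
    rw [hβ] at hi; rw [hγ] at hi'; linarith [hi'.2]
  have hPdec : P = (P ∩ α) ∪ (P ∩ β) ∪ (P ∩ γ) := by
    rw [← Finset.inter_union_distrib_left, ← Finset.inter_union_distrib_left]
    exact (Finset.inter_eq_left.mpr hP).symm
  have dPαβ : Disjoint (P ∩ α) (P ∩ β) :=
    dαβ.mono Finset.inter_subset_right Finset.inter_subset_right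
  have dPαγ : Disjoint (P ∩ α) (P ∩ γ) :=
    dαγ.mono Finset.inter_subset_right Finset.inter_subset_right
  have dPβγ : Disjoint (P ∩ β) (P ∩ γ) :=
    dβγ.mono Finset.inter_subset_right Finset.inter_subset_right
  have hsumpos : ∑ i ∈ (α ∪ β ∪ γ) \ P, z i ^ 2
      = ∑ i ∈ α ∪ β ∪ γ, z i ^ 2 - ∑ i ∈ P, z i ^ 2 := by
    rw [eq_sub_iff_add_eq, Finset.sum_sdiff_eq_sub hP]
    ring
  have hsumβ : ∑ i ∈ β, z i ^ 2 = (β.card : ℝ) * zs ^ 2 := by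
    rw [Finset.sum_congr rfl (fun i hi => by rw [(hβ i).mp hi]), Finset.sum_const,
      nsmul_eq_mul]
  have hsumPβ : ∑ i ∈ P ∩ β, z i ^ 2 = ((P ∩ β).card : ℝ) * zs ^ 2 := by
    rw [Finset.sum_congr rfl (fun i hi => by
      rw [(hβ i).mp (Finset.mem_of_mem_inter_right hi)]), Finset.sum_const, nsmul_eq_mul]
  have hsumposU : ∑ i ∈ α ∪ β ∪ γ, z i ^ 2
      = ∑ i ∈ α, z i ^ 2 + (β.card : ℝ) * zs ^ 2 + ∑ i ∈ γ, z i ^ 2 := by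
    rw [Finset.sum_union (by
      exact Finset.disjoint_union_left.mpr ⟨dαγ, dβγ⟩),
      Finset.sum_union dαβ, hsumβ]
  have hsumP : ∑ i ∈ P, z i ^ 2
      = ∑ i ∈ P ∩ α, z i ^ 2 + ((P ∩ β).card : ℝ) * zs ^ 2 + ∑ i ∈ P ∩ γ, z i ^ 2 := by
    conv_lhs => rw [hPdec]
    rw [Finset.sum_union (Finset.disjoint_union_left.mpr ⟨dPαγ, dPβγ⟩),
      Finset.sum_union dPαβ, hsumPβ]
  have hsumPα : ∑ i ∈ P ∩ α, z i ^ 2 = ∑ i ∈ α, z i ^ 2 - ∑ i ∈ α \ P, z i ^ 2 := by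
    rw [eq_sub_iff_add_eq]
    rw [Finset.inter_comm]
    rw [Finset.sum_inter_add_sum_sdiff]
  have hcard : (P ∩ α).card + (P ∩ β).card + (P ∩ γ).card = P.card := by
    conv_rhs => rw [hPdec]
    rw [Finset.card_union_of_disjoint (Finset.disjoint_union_left.mpr ⟨dPαγ, dPβγ⟩),
      Finset.card_union_of_disjoint dPαβ]
  have hcardα : (α \ P).card + (P ∩ α).card = α.card := by
    rw [Finset.inter_comm]
    rw [Finset.card_sdiff_add_card_inter]
  have h1 : ((α \ P).card : ℝ) * zs ^ 2 ≤ ∑ i ∈ α \ P, z i ^ 2 := by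
    rw [← nsmul_eq_mul, ← Finset.sum_const]
    apply Finset.sum_le_sum
    intro i hi
    have : zs < z i := (hα i).mp ((Finset.mem_sdiff.mp hi).1)
    nlinarith
  have h2 : ∑ i ∈ P ∩ γ, z i ^ 2 ≤ ((P ∩ γ).card : ℝ) * zs ^ 2 := by
    rw [← nsmul_eq_mul, ← Finset.sum_const]
    apply Finset.sum_le_sum
    intro i hi
    have := (hγ i).mp (Finset.mem_of_mem_inter_right hi)
    nlinarith [this.1, this.2]
  have hc3 : ((P ∩ α).card : ℝ) + (P ∩ β).card + (P ∩ γ).card ≤ (s : ℝ) := by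
    have : ((P.card : ℕ) : ℝ) ≤ (s : ℝ) := by exact_mod_cast hPs
    push_cast [← hcard] at this ⊢
    linarith
  have hc4 : ((α \ P).card : ℝ) + (P ∩ α).card = (α.card : ℝ) := by exact_mod_cast hcardα
  have hzs2 : (0:ℝ) < zs ^ 2 := by positivity
  have hc4z : (((α \ P).card : ℝ) + ((P ∩ α).card : ℝ)) * zs ^ 2 = (α.card : ℝ) * zs ^ 2 := by
    rw [hc4]
  have hprod : (((P ∩ α).card : ℝ) + ((P ∩ β).card : ℝ) + ((P ∩ γ).card : ℝ)) * zs ^ 2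
      ≤ (s : ℝ) * zs ^ 2 := mul_le_mul_of_nonneg_right hc3 hzs2.le
  constructor
  · rw [hsumpos, hsumposU, hsumP, hsumPα]
    linarith [hprod, hc4z, h1, h2]
  · intro heq
    rw [hsumpos, hsumposU, hsumP, hsumPα] at heq
    refine ⟨?_, ?_, ?_⟩
    · by_contra hsub
      obtain ⟨i, hi⟩ := Finset.not_subset.mp hsub
      have hne : (α \ P).Nonempty := ⟨i, Finset.mem_sdiff.mpr ⟨hi.1, hi.2⟩⟩
      have h1' : ((α \ P).card : ℝ) * zs ^ 2 < ∑ i ∈ α \ P, z i ^ 2 := by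
        rw [← nsmul_eq_mul, ← Finset.sum_const]
        apply Finset.sum_lt_sum_of_nonempty hne
        intro i hi
        have : zs < z i := (hα i).mp ((Finset.mem_sdiff.mp hi).1)
        nlinarith
      linarith [hprod, hc4z, h1', h2]
    · by_contra hne'
      have hne : (P ∩ γ).Nonempty := Finset.nonempty_iff_ne_empty.mpr hne'
      have h2' : ∑ i ∈ P ∩ γ, z i ^ 2 < ((P ∩ γ).card : ℝ) * zs ^ 2 := by
        rw [← nsmul_eq_mul, ← Finset.sum_const]
        apply Finset.sum_lt_sum_of_nonempty hne
        intro i hi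
        have := (hγ i).mp (Finset.mem_of_mem_inter_right hi)
        nlinarith [this.1, this.2]
      linarith [hprod, hc4z, h1, h2']
    · by_contra hlt'
      have hlt : P.card < s := by omega
      have hc3' : ((P ∩ α).card : ℝ) + (P ∩ β).card + (P ∩ γ).card < (s : ℝ) := by
        have : ((P.card : ℕ) : ℝ) < (s : ℝ) := by exact_mod_cast hlt
        push_cast [← hcard] at this ⊢
        linarith
      linarith [mul_lt_mul_of_pos_right hc3' hzs2, hc4z, h1, h2]

lemma norm_sq_eq (n : ℕ) (v : EuclideanSpace ℝ (Fin n)) : ‖v‖ ^ 2 = ∑ i, (v i) ^ 2 := by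
  rw [EuclideanSpace.norm_eq, Real.sq_sqrt (by positivity)]
  exact Finset.sum_congr rfl fun i _ => by rw [Real.norm_eq_abs, sq_abs]

set_option maxHeartbeats 1000000 in
theorem stmt_1 (n s : ℕ) (hn : 0 < n) (hs : 0 < s) (hsn : s ≤ n)
    (z : EuclideanSpace ℝ (Fin n))
    (hz : s ≤ (Finset.univ.filter fun i => 0 < z i).card)
    -- `zs` is the `s`-th largest entry `z↓_s` of `z`
    (zs : ℝ) (hzs : zs = descSort n (fun j => z j) ⟨s - 1, by omega⟩)
    (α β γ τ : Finset (Fin n))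
    (hα : α = Finset.univ.filter fun i => zs < z i ∧ 0 < z i)
    (hβ : β = Finset.univ.filter fun i => z i = zs ∧ 0 < z i)
    (hγ : γ = Finset.univ.filter fun i => 0 < z i ∧ z i < zs)
    (hτ : τ = Finset.univ.filter fun i => z i ≤ 0) :
    projSet n s z =
      {x : EuclideanSpace ℝ (Fin n) | ∃ β₁ ⊆ β, β₁.card = s - α.card ∧
        (∀ i ∈ α ∪ β₁ ∪ τ, x i = z i) ∧ (∀ i ∈ (β \ β₁) ∪ γ, x i = 0)} := by
  classical
  obtain ⟨hlt, hge⟩ := sort_facts n s hs hsn (fun j => z j) zs hzs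
  have hzspos : 0 < zs := by
    by_contra h
    push_neg at h
    have hsub : (Finset.univ.filter fun i => 0 < z i)
        ⊆ (Finset.univ.filter fun i => zs < z i) := by
      intro i hi
      simp only [Finset.mem_filter, Finset.mem_univ, true_and] at hi ⊢
      linarith
    have := Finset.card_le_card hsub
    omega
  have hα' : ∀ i, i ∈ α ↔ zs < z i := by
    intro i
    rw [hα]
    simp only [Finset.mem_filter, Finset.mem_univ, true_and]
    exact ⟨fun h => h.1, fun h => ⟨h, lt_trans hzspos h⟩⟩
  have hβ' : ∀ i, i ∈ β ↔ z i = zs := by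
    intro i
    rw [hβ]
    simp only [Finset.mem_filter, Finset.mem_univ, true_and]
    exact ⟨fun h => h.1, fun h => ⟨h, h ▸ hzspos⟩⟩
  have hγ' : ∀ i, i ∈ γ ↔ 0 < z i ∧ z i < zs := by
    intro i
    rw [hγ]
    simp only [Finset.mem_filter, Finset.mem_univ, true_and]
  have hτ' : ∀ i, i ∈ τ ↔ z i ≤ 0 := by
    intro i
    rw [hτ]
    simp only [Finset.mem_filter, Finset.mem_univ, true_and]
  have hαcard : α.card < s := by
    have : α = Finset.univ.filter fun i => zs < z i :=
      Finset.ext fun i => by simp [hα' i]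
    rw [this]; exact hlt
  have hβcard : s ≤ α.card + β.card := by
    have hun : (Finset.univ.filter fun i => zs ≤ z i) = α ∪ β := by
      ext i
      simp only [Finset.mem_filter, Finset.mem_univ, true_and, Finset.mem_union, hα' i, hβ' i]
      constructor
      · intro h
        rcases eq_or_lt_of_le h with h' | h'
        · exact Or.inr h'.symm
        · exact Or.inl h'
      · rintro (h | h)
        · exact h.le
        · exact h.ge
    have hd : Disjoint α β := by
      rw [Finset.disjoint_left]
      intro i hi hi'
      rw [hα'] at hi; rw [hβ'] at hi'
      linarith
    calc s ≤ (Finset.univ.filter fun i => zs ≤ z i).card := hge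
      _ = (α ∪ β).card := by rw [hun]
      _ = α.card + β.card := Finset.card_union_of_disjoint hd
  set pos := α ∪ β ∪ γ with hposdef
  have hposmem : ∀ i, i ∈ pos ↔ 0 < z i := by
    intro i
    simp only [hposdef, Finset.mem_union, hα' i, hβ' i, hγ' i]
    constructor
    · rintro ((h | h) | h)
      · linarith
      · rw [h]; exact hzspos
      · exact h.1
    · intro h
      rcases lt_trichotomy (z i) zs with h' | h' | h'
      · exact Or.inr ⟨h, h'⟩
      · exact Or.inl (Or.inr h')
      · exact Or.inl (Or.inl h')
  have cover : ∀ i : Fin n, i ∈ pos ∨ i ∈ τ := by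
    intro i
    rcases le_or_gt (z i) 0 with h | h
    · exact Or.inr ((hτ' i).mpr h)
    · exact Or.inl ((hposmem i).mpr h)
  set D : ℝ := ∑ i ∈ γ, z i ^ 2 + ((β.card : ℝ) - ((s : ℝ) - α.card)) * zs ^ 2 with hDdef
  have hnorm : ∀ x : EuclideanSpace ℝ (Fin n), ‖z - x‖ ^ 2 = ∑ i, (z i - x i) ^ 2 := by
    intro x
    rw [norm_sq_eq]
    exact Finset.sum_congr rfl fun i _ => by simp [PiLp.sub_apply]
  -- the "achieve" direction
  have hach : ∀ x : EuclideanSpace ℝ (Fin n),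
      (∃ β₁ ⊆ β, β₁.card = s - α.card ∧
        (∀ i ∈ α ∪ β₁ ∪ τ, x i = z i) ∧ (∀ i ∈ (β \ β₁) ∪ γ, x i = 0)) →
      x ∈ Omega n s ∧ ‖z - x‖ ^ 2 = D := by
    rintro x ⟨β₁, hβ₁β, hβ₁card, hxz, hx0⟩
    constructor
    · have hsubset : (Finset.univ.filter fun i => 0 < x i) ⊆ α ∪ β₁ := by
        intro i hi
        simp only [Finset.mem_filter, Finset.mem_univ, true_and] at hi
        rcases cover i with hp | ht
        · rw [hposdef, Finset.mem_union, Finset.mem_union] at hp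
          rcases hp with (h | h) | h
          · exact Finset.mem_union_left _ h
          · by_cases hb : i ∈ β₁
            · exact Finset.mem_union_right _ hb
            · have := hx0 i (Finset.mem_union_left _ (Finset.mem_sdiff.mpr ⟨h, hb⟩))
              linarith
          · have := hx0 i (Finset.mem_union_right _ h)
            linarith
        · have h1 := hxz i (Finset.mem_union_right _ ht)
          have h2 := (hτ' i).mp ht
          linarith
      have hcard2 : (α ∪ β₁).card ≤ s := by
        calc (α ∪ β₁).card ≤ α.card + β₁.card := Finset.card_union_le _ _
          _ = α.card + (s - α.card) := by rw [hβ₁card]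
          _ ≤ s := by omega
      exact le_trans (Finset.card_le_card hsubset) hcard2
    · rw [hnorm x]
      have hKvanish : ∀ i ∈ Finset.univ, i ∉ (β \ β₁) ∪ γ → (z i - x i) ^ 2 = 0 := by
        intro i _ hiK
        have hxzi : x i = z i := by
          apply hxz
          rcases cover i with hp | ht
          · rw [hposdef, Finset.mem_union, Finset.mem_union] at hp
            rcases hp with (h | h) | h
            · exact Finset.mem_union_left _ (Finset.mem_union_left _ h)
            · by_cases hb : i ∈ β₁
              · exact Finset.mem_union_left _ (Finset.mem_union_right _ hb)
              · exact absurd (Finset.mem_union_left _ (Finset.mem_sdiff.mpr ⟨h, hb⟩)) hiK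
            · exact absurd (Finset.mem_union_right _ h) hiK
          · exact Finset.mem_union_right _ ht
        rw [hxzi]; ring
      have hsum1 : ∑ i, (z i - x i) ^ 2 = ∑ i ∈ (β \ β₁) ∪ γ, (z i - x i) ^ 2 :=
        (Finset.sum_subset (Finset.subset_univ _) hKvanish).symm
      have hsum2 : ∑ i ∈ (β \ β₁) ∪ γ, (z i - x i) ^ 2 = ∑ i ∈ (β \ β₁) ∪ γ, z i ^ 2 :=
        Finset.sum_congr rfl fun i hi => by rw [hx0 i hi, sub_zero]
      have hdisj : Disjoint (β \ β₁) γ := by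
        rw [Finset.disjoint_left]
        intro i hi hi'
        have h1 := (hβ' i).mp (Finset.mem_sdiff.mp hi).1
        have h2 := (hγ' i).mp hi'
        linarith [h2.2]
      have hsumsd : ∑ i ∈ β \ β₁, z i ^ 2 = (((β \ β₁).card : ℕ) : ℝ) * zs ^ 2 := by
        rw [Finset.sum_congr rfl (fun i hi => by
          rw [(hβ' i).mp (Finset.mem_sdiff.mp hi).1]), Finset.sum_const, nsmul_eq_mul]
      have hcards : (((β \ β₁).card : ℕ) : ℝ) = (β.card : ℝ) - ((s : ℝ) - (α.card : ℝ)) := by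
        rw [Finset.card_sdiff_of_subset hβ₁β, hβ₁card]
        have h1 : s - α.card ≤ β.card := by omega
        have h2 : α.card ≤ s := hαcard.le
        rw [Nat.cast_sub h1, Nat.cast_sub h2]
      rw [hsum1, hsum2, Finset.sum_union hdisj, hsumsd, hcards, hDdef]
      ring
  -- the lower bound
  have hlow : ∀ y : EuclideanSpace ℝ (Fin n), y ∈ Omega n s → D ≤ ‖z - y‖ ^ 2 := by
    intro y hy
    set P := (Finset.univ.filter fun i => 0 < y i) ∩ pos with hPdef
    have hPsub : P ⊆ pos := Finset.inter_subset_right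
    have hPcard : P.card ≤ s := le_trans (Finset.card_le_card Finset.inter_subset_left) hy
    have hcore := (core_ineq n s (fun i => z i) zs hzspos α β γ hα' hβ' hγ' P hPsub hPcard).1
    rw [hnorm y]
    have hstep : ∑ i ∈ pos \ P, z i ^ 2 ≤ ∑ i ∈ pos \ P, (z i - y i) ^ 2 := by
      apply Finset.sum_le_sum
      intro i hi
      obtain ⟨hip, hinP⟩ := Finset.mem_sdiff.mp hi
      have hzi : 0 < z i := (hposmem i).mp hip
      have hyi : y i ≤ 0 := by
        by_contra hyy
        push_neg at hyy
        exact hinP (Finset.mem_inter.mpr ⟨Finset.mem_filter.mpr ⟨Finset.mem_univ _, hyy⟩, hip⟩)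
      nlinarith
    calc D ≤ ∑ i ∈ pos \ P, z i ^ 2 := hcore
      _ ≤ ∑ i ∈ pos \ P, (z i - y i) ^ 2 := hstep
      _ ≤ ∑ i, (z i - y i) ^ 2 :=
        Finset.sum_le_sum_of_subset_of_nonneg (Finset.subset_univ _)
          (fun i _ _ => sq_nonneg _)
  -- an explicit projection point
  obtain ⟨β₀, hβ₀β, hβ₀card⟩ :=
    Finset.exists_subset_card_eq (show s - α.card ≤ β.card by omega)
  have hτdisj : ∀ i ∈ (β \ β₀) ∪ γ, i ∉ α ∪ β₀ ∪ τ := by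
    intro i hi
    rw [Finset.mem_union, Finset.mem_union]
    push_neg
    rcases Finset.mem_union.mp hi with h | h
    · obtain ⟨hb, hb0⟩ := Finset.mem_sdiff.mp h
      have hzi := (hβ' i).mp hb
      refine ⟨⟨?_, hb0⟩, ?_⟩
      · rw [hα']; linarith
      · rw [hτ']; push_neg; linarith
    · have hzi := (hγ' i).mp h
      refine ⟨⟨?_, ?_⟩, ?_⟩
      · rw [hα']; linarith [hzi.2]
      · intro hb0
        have := (hβ' i).mp (hβ₀β hb0)
        linarith [hzi.2]
      · rw [hτ']; push_neg; exact hzi.1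
  set x₀ : EuclideanSpace ℝ (Fin n) :=
    WithLp.toLp 2 (fun i => if i ∈ α ∪ β₀ ∪ τ then z i else 0) with hx₀def
  have hx₀mem : ∃ β₁ ⊆ β, β₁.card = s - α.card ∧
      (∀ i ∈ α ∪ β₁ ∪ τ, x₀ i = z i) ∧ (∀ i ∈ (β \ β₁) ∪ γ, x₀ i = 0) :=
    ⟨β₀, hβ₀β, hβ₀card, fun i hi => if_pos hi, fun i hi => if_neg (hτdisj i hi)⟩
  obtain ⟨hx₀Ω, hx₀n⟩ := hach x₀ hx₀mem
  have hD0 : 0 ≤ D := hx₀n ▸ sq_nonneg _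
  have hΩne : (Omega n s).Nonempty := ⟨x₀, hx₀Ω⟩
  have hinf : Metric.infDist z (Omega n s) = Real.sqrt D := by
    apply le_antisymm
    · calc Metric.infDist z (Omega n s) ≤ dist z x₀ := Metric.infDist_le_dist_of_mem hx₀Ω
        _ = ‖z - x₀‖ := dist_eq_norm _ _
        _ = Real.sqrt D := by rw [← hx₀n, Real.sqrt_sq (norm_nonneg _)]
    · by_contra hc
      push_neg at hc
      obtain ⟨y, hyΩ, hyd⟩ := (Metric.infDist_lt_iff hΩne).mp hc
      have h1 := hlow y hyΩ
      rw [dist_eq_norm] at hyd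
      have h2 : Real.sqrt D ≤ ‖z - y‖ := by
        calc Real.sqrt D ≤ Real.sqrt (‖z - y‖ ^ 2) := Real.sqrt_le_sqrt h1
          _ = ‖z - y‖ := Real.sqrt_sq (norm_nonneg _)
      linarith
  -- the set equality
  ext x
  simp only [projSet, Set.mem_setOf_eq]
  constructor
  · rintro ⟨hxΩ, hxn⟩
    have hxD : ‖z - x‖ ^ 2 = D := by
      rw [hxn, hinf, Real.sq_sqrt hD0]
    set P := (Finset.univ.filter fun i => 0 < x i) ∩ pos with hPdef
    have hPsub : P ⊆ pos := Finset.inter_subset_right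
    have hPcard : P.card ≤ s := le_trans (Finset.card_le_card Finset.inter_subset_left) hxΩ
    have hcore := core_ineq n s (fun i => z i) zs hzspos α β γ hα' hβ' hγ' P hPsub hPcard
    have hsplit : ∑ i ∈ Finset.univ \ (pos \ P), (z i - x i) ^ 2
        + ∑ i ∈ pos \ P, (z i - x i) ^ 2 = D := by
      rw [Finset.sum_sdiff (Finset.subset_univ _), ← hnorm x, hxD]
    have hCA : ∑ i ∈ pos \ P, z i ^ 2 ≤ ∑ i ∈ pos \ P, (z i - x i) ^ 2 := by
      apply Finset.sum_le_sum
      intro i hi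
      obtain ⟨hip, hinP⟩ := Finset.mem_sdiff.mp hi
      have hzi : 0 < z i := (hposmem i).mp hip
      have hxi : x i ≤ 0 := by
        by_contra hxx
        push_neg at hxx
        exact hinP (Finset.mem_inter.mpr ⟨Finset.mem_filter.mpr ⟨Finset.mem_univ _, hxx⟩, hip⟩)
      nlinarith
    have hB0 : 0 ≤ ∑ i ∈ Finset.univ \ (pos \ P), (z i - x i) ^ 2 :=
      Finset.sum_nonneg fun i _ => sq_nonneg _
    have hDC := hcore.1
    have hCD : ∑ i ∈ pos \ P, z i ^ 2 ≤ D := by linarith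
    obtain ⟨hαP, hPγ, hPcards⟩ := hcore.2 hCD
    have hBzero : ∑ i ∈ Finset.univ \ (pos \ P), (z i - x i) ^ 2 = 0 := by linarith
    have hxz : ∀ i ∈ Finset.univ \ (pos \ P), x i = z i := by
      intro i hi
      have h := (Finset.sum_eq_zero_iff_of_nonneg fun i _ => sq_nonneg _).mp hBzero i hi
      have := pow_eq_zero_iff (n := 2) (by norm_num) |>.mp h
      linarith [sub_eq_zero.mp this]
    have hAeq : ∑ i ∈ pos \ P, (z i - x i) ^ 2 = ∑ i ∈ pos \ P, z i ^ 2 := by linarith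
    have hterm : ∀ i ∈ pos \ P, z i ^ 2 = (z i - x i) ^ 2 :=
      (Finset.sum_eq_sum_iff_of_le (fun i hi => by
        obtain ⟨hip, hinP⟩ := Finset.mem_sdiff.mp hi
        have hzi : 0 < z i := (hposmem i).mp hip
        have hxi : x i ≤ 0 := by
          by_contra hxx
          push_neg at hxx
          exact hinP (Finset.mem_inter.mpr ⟨Finset.mem_filter.mpr ⟨Finset.mem_univ _, hxx⟩, hip⟩)
        nlinarith)).mp hAeq.symm
    have hx0' : ∀ i ∈ pos \ P, x i = 0 := by
      intro i hi
      have h := hterm i hi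
      obtain ⟨hip, hinP⟩ := Finset.mem_sdiff.mp hi
      have hzi : 0 < z i := (hposmem i).mp hip
      have hxi : x i ≤ 0 := by
        by_contra hxx
        push_neg at hxx
        exact hinP (Finset.mem_inter.mpr ⟨Finset.mem_filter.mpr ⟨Finset.mem_univ _, hxx⟩, hip⟩)
      nlinarith
    have hPdec : P = α ∪ (P ∩ β) := by
      ext i
      simp only [Finset.mem_union, Finset.mem_inter]
      constructor
      · intro hiP
        have hip := hPsub hiP
        rw [hposdef, Finset.mem_union, Finset.mem_union] at hip
        rcases hip with (h | h) | h
        · exact Or.inl h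
        · exact Or.inr ⟨hiP, h⟩
        · exact absurd (Finset.mem_inter.mpr ⟨hiP, h⟩) (by rw [hPγ]; simp)
      · rintro (h | h)
        · exact hαP h
        · exact h.1
    have hdαPβ : Disjoint α (P ∩ β) := by
      rw [Finset.disjoint_left]
      intro i hi hi'
      have h1 := (hα' i).mp hi
      have h2 := (hβ' i).mp (Finset.mem_inter.mp hi').2
      linarith
    have hcardPβ : α.card + (P ∩ β).card = s := by
      have hstep : (α ∪ P ∩ β).card = α.card + (P ∩ β).card :=
        Finset.card_union_of_disjoint hdαPβ
      rw [← hPdec] at hstep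
      omega
    refine ⟨P ∩ β, Finset.inter_subset_right, by omega, ?_, ?_⟩
    · intro i hi
      apply hxz
      rw [Finset.mem_sdiff]
      refine ⟨Finset.mem_univ _, ?_⟩
      intro hmem
      obtain ⟨hip, hinP⟩ := Finset.mem_sdiff.mp hmem
      rcases Finset.mem_union.mp hi with h | h
      · apply hinP
        rw [hPdec]
        rcases Finset.mem_union.mp h with h' | h'
        · rw [hPdec] at *
          exact Finset.mem_union_left _ h'
        · exact Finset.mem_union_right _ h'
      · have h1 := (hτ' i).mp h
        have h2 := (hposmem i).mp hip
        linarith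
    · intro i hi
      apply hx0'
      rw [Finset.mem_sdiff]
      rcases Finset.mem_union.mp hi with h | h
      · obtain ⟨hb, hbP⟩ := Finset.mem_sdiff.mp h
        constructor
        · rw [hposdef]
          exact Finset.mem_union_left _ (Finset.mem_union_right _ hb)
        · intro hiP
          exact hbP (Finset.mem_inter.mpr ⟨hiP, hb⟩)
      · constructor
        · rw [hposdef]
          exact Finset.mem_union_right _ h
        · intro hiP
          have : i ∈ P ∩ γ := Finset.mem_inter.mpr ⟨hiP, h⟩
          rw [hPγ] at this
          simp at this
  · rintro ⟨β₁, h1, h2, h3, h4⟩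
    obtain ⟨hΩ, hn2⟩ := hach x ⟨β₁, h1, h2, h3, h4⟩
    refine ⟨hΩ, ?_⟩
    rw [hinf, ← hn2, Real.sqrt_sq (norm_nonneg _)]
end
end

section
/- For every z ∈ ℝ^n, the squared distance from z to Ω_s equals the sum of the squares of all but the s largest entries of the positive part of z; that is, dist(z, Ω_s)² = Σ_{i=s+1}^{n} ((z₊)↓_i)², where z₊ := max(z, 0) componentwise and (z₊)↓ is the nonincreasing rearrangement of z₊. -/
open scoped BigOperators

noncomputable section

private lemma le_of_strictMono' {m n : ℕ} (f : Fin m → Fin n) (hf : StrictMono f) :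
    ∀ (jv : ℕ) (h : jv < m), jv ≤ (f ⟨jv, h⟩ : ℕ) := by
  intro jv
  induction jv with
  | zero => intro h; exact Nat.zero_le _
  | succ k ih =>
    intro h
    have hk : k < m := Nat.lt_of_succ_lt h
    have h1 := ih hk
    have h2 : f ⟨k, hk⟩ < f ⟨k + 1, h⟩ := hf (by simp [Fin.lt_def])
    exact Nat.lt_of_le_of_lt h1 h2

/-- Sum of a nonnegative antitone function over any set of cardinality `≤ s` is at most
its sum over the first `s` indices. -/
private lemma sum_le_sum_first {n s : ℕ} (g : Fin n → ℝ) (hg : Antitone g)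
    (hg0 : ∀ i, 0 ≤ g i) (K : Finset (Fin n)) (hK : K.card ≤ s) :
    ∑ k ∈ K, g k ≤ ∑ k ∈ Finset.univ.filter (fun k : Fin n => (k : ℕ) < s), g k := by
  set m := K.card with hm
  have hmn : m ≤ n := by simpa using K.card_le_univ
  set e := K.orderEmbOfFin hm.symm with he
  have hinj : Function.Injective e := e.injective
  have himg : Finset.univ.image (fun j => e j) = K := by
    ext x
    simp only [Finset.mem_image, Finset.mem_univ, true_and]
    constructor
    · rintro ⟨j, rfl⟩; exact Finset.orderEmbOfFin_mem K hm.symm j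
    · intro hx
      have : x ∈ Set.range e := by
        rw [Finset.range_orderEmbOfFin]; exact hx
      obtain ⟨j, hj⟩ := this
      exact ⟨j, hj⟩
  calc ∑ k ∈ K, g k = ∑ j : Fin m, g (e j) := by
        rw [← himg, Finset.sum_image (fun a _ b _ h => hinj h)]
    _ ≤ ∑ j : Fin m, g (Fin.castLE hmn j) := by
        apply Finset.sum_le_sum
        intro j _
        apply hg
        have := le_of_strictMono' e e.strictMono j j.isLt
        rw [Fin.le_def]
        simpa using this
    _ = ∑ k ∈ Finset.univ.image (Fin.castLE hmn), g k := by
        rw [Finset.sum_image (fun a _ b _ h => Fin.castLE_injective hmn h)]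
    _ ≤ _ := by
        apply Finset.sum_le_sum_of_subset_of_nonneg
        · intro k hk
          simp only [Finset.mem_image, Finset.mem_univ, true_and] at hk
          obtain ⟨j, rfl⟩ := hk
          simp only [Finset.mem_filter, Finset.mem_univ, true_and, Fin.coe_castLE]
          exact lt_of_lt_of_le j.isLt hK
        · intro i _ _; exact hg0 i

/-- `dist(z, Ω_s)² = Σ_{i=s+1}^{n} ((z₊)↓_i)²` (one-indexed), i.e. the sum of the squares of
all but the `s` largest entries of the positive part `z₊ = max(z, 0)` of `z`. -/
theorem stmt_2 (n s : ℕ) (hn : 0 < n) (hs : 0 < s) (hsn : s ≤ n)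
    (z : EuclideanSpace ℝ (Fin n)) :
    Metric.infDist z (Omega n s) ^ 2 =
      ∑ i ∈ Finset.univ.filter (fun i : Fin n => s ≤ (i : ℕ)),
        (descSort n (fun j => max (z j) 0) i) ^ 2 := by
  classical
  set w : Fin n → ℝ := fun j => max (z j) 0 with hw
  set σ : Equiv.Perm (Fin n) := Tuple.sort (fun j => -w j) with hσ
  have hw0 : ∀ i, 0 ≤ w i := fun i => le_max_right _ _
  have hanti : Antitone (fun k => w (σ k)) := by
    intro i j hij
    have := Tuple.monotone_sort (fun j => -w j) hij
    simpa using this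
  set v : Fin n → ℝ := fun i => (w i) ^ 2 with hv
  have hv0 : ∀ i, 0 ≤ v i := fun i => sq_nonneg _
  have hvanti : Antitone (fun k => v (σ k)) := by
    intro i j hij
    exact pow_le_pow_left₀ (hw0 _) (hanti hij) 2
  set Ts : Finset (Fin n) := Finset.univ.filter (fun i : Fin n => s ≤ (i : ℕ)) with hTs
  set Ks : Finset (Fin n) := Finset.univ.filter (fun i : Fin n => (i : ℕ) < s) with hKs
  set T₀ : Finset (Fin n) := Ts.image σ with hT₀
  -- the RHS
  have hRHS : ∑ i ∈ Ts, (descSort n (fun j => max (z j) 0) i) ^ 2 = ∑ j ∈ T₀, v j := by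
    rw [hT₀, Finset.sum_image (fun a _ b _ h => σ.injective h)]
    rfl
  -- cardinalities
  have hKscard : Ks.card ≤ s := by
    have : Ks.card ≤ (Finset.range s).card := by
      apply Finset.card_le_card_of_injOn (fun i : Fin n => (i : ℕ))
      · intro a ha
        simp only [hKs, Finset.coe_filter, Set.mem_setOf_eq, Finset.mem_filter] at ha
        simpa using ha.2
      · intro a _ b _ h
        exact Fin.val_injective h
    simpa using this
  have hpartcard : Ks.card + Ts.card = n := by
    have := Finset.card_filter_add_card_filter_not
      (s := (Finset.univ : Finset (Fin n))) (p := fun i : Fin n => (i : ℕ) < s)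
    simp only [not_lt, Finset.card_univ, Fintype.card_fin] at this
    rw [hKs, hTs]
    convert this using 3
  have hT₀card : T₀.card = Ts.card := Finset.card_image_of_injective _ σ.injective
  have hT₀ccard : T₀ᶜ.card ≤ s := by
    rw [Finset.card_compl, Fintype.card_fin, hT₀card]
    omega
  -- splitting sums over the partition Ks ∪ Ts = univ
  have hsplit : ∀ f : Fin n → ℝ, ∑ i ∈ Ks, f i + ∑ i ∈ Ts, f i = ∑ i, f i := by
    intro f
    have := Finset.sum_filter_add_sum_filter_not Finset.univ
      (fun i : Fin n => (i : ℕ) < s) f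
    simpa [not_lt, hKs, hTs] using this
  -- sum over T₀ of v
  have hT₀sum : ∑ j ∈ T₀, v j = ∑ i ∈ Ts, v (σ i) :=
    Finset.sum_image (fun a _ b _ h => σ.injective h)
  have hA0 : 0 ≤ ∑ j ∈ T₀, v j := Finset.sum_nonneg fun j _ => hv0 j
  -- Ω is nonempty
  have hne : (Omega n s).Nonempty := by
    refine ⟨0, ?_⟩
    simp [Omega]
  -- the minimizer
  set x₀ : EuclideanSpace ℝ (Fin n) := WithLp.toLp 2 (fun j => if j ∈ T₀ then min (z j) 0 else z j) with hx₀
  have hx₀Ω : x₀ ∈ Omega n s := by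
    simp only [Omega, Set.mem_setOf_eq]
    refine le_trans (Finset.card_le_card ?_) hT₀ccard
    intro i hi
    simp only [Finset.mem_filter, Finset.mem_univ, true_and] at hi
    simp only [Finset.mem_compl]
    intro hmem
    rw [hx₀] at hi
    simp only [PiLp.toLp_apply, hmem, if_true] at hi
    have : min (z i) 0 ≤ 0 := min_le_right _ _
    linarith
  have hdistx₀ : dist z x₀ = Real.sqrt (∑ j ∈ T₀, v j) := by
    rw [EuclideanSpace.dist_eq]
    simp only [Real.dist_eq, sq_abs]
    congr 1
    have hterm : ∀ j : Fin n, (z j - x₀ j) ^ 2 = if j ∈ T₀ then v j else 0 := by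
      intro j
      by_cases h : j ∈ T₀
      · simp only [PiLp.toLp_apply, h, if_true, hx₀, hv, hw]
        have : z j - min (z j) 0 = max (z j) 0 := by
          rcases le_total (z j) 0 with h' | h'
          · rw [min_eq_left h', max_eq_right h']; ring
          · rw [min_eq_right h', max_eq_left h']; ring
        rw [this]
      · simp [hx₀, h]
    rw [Finset.sum_congr rfl (fun j _ => hterm j)]
    rw [Finset.sum_ite_mem, Finset.univ_inter]
  -- key inequality: for any x ∈ Ω, dist z x ≥ sqrt (∑ T₀ v)
  have hlow : ∀ x ∈ Omega n s, Real.sqrt (∑ j ∈ T₀, v j) ≤ dist z x := by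
    intro x hx
    rw [EuclideanSpace.dist_eq]
    simp only [Real.dist_eq, sq_abs]
    apply Real.sqrt_le_sqrt
    set P : Finset (Fin n) := Finset.univ.filter (fun i => 0 < x i) with hP
    have hPcard : P.card ≤ s := hx
    -- sum over P of v is at most sum over Ks of v ∘ σ
    have key : ∑ i ∈ P, v i ≤ ∑ k ∈ Ks, v (σ k) := by
      have himg : ∑ k ∈ P.image σ.symm, v (σ k) = ∑ i ∈ P, v i := by
        rw [Finset.sum_image (fun a _ b _ h => σ.symm.injective h)]
        simp
      rw [← himg]
      refine sum_le_sum_first (fun k => v (σ k)) hvanti (fun k => hv0 _) _ ?_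
      rw [Finset.card_image_of_injective _ σ.symm.injective]
      exact hPcard
    have hcompl : ∑ i ∈ Pᶜ, v i + ∑ i ∈ P, v i = ∑ i, v i := Finset.sum_compl_add_sum P v
    have hperm : ∑ k, v (σ k) = ∑ i, v i := Equiv.sum_comp σ v
    have hsv := hsplit (fun k => v (σ k))
    -- ∑ T₀ v = ∑ univ v - ∑ Ks (v∘σ) ≤ ∑ univ v - ∑ P v = ∑ Pᶜ v
    have h1 : ∑ j ∈ T₀, v j ≤ ∑ i ∈ Pᶜ, v i := by
      rw [hT₀sum]
      linarith
    refine le_trans h1 (le_trans (b := ∑ i ∈ Pᶜ, (z i - x i) ^ 2) ?_ ?_)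
    · -- ∑ Pᶜ v ≤ ∑ Pᶜ (z i - x i)^2
      apply Finset.sum_le_sum
      intro i hi
      have hxi : x i ≤ 0 := by
        simp only [hP, Finset.mem_compl, Finset.mem_filter, Finset.mem_univ, true_and,
          not_lt] at hi
        exact hi
      have habs : max (z i) 0 ≤ |z i - x i| := by
        rcases le_total (z i) 0 with h' | h'
        · rw [max_eq_right h']; exact abs_nonneg _
        · rw [max_eq_left h']
          refine le_trans ?_ (le_abs_self _)
          linarith
      calc v i = (max (z i) 0) ^ 2 := rfl
        _ ≤ |z i - x i| ^ 2 := pow_le_pow_left₀ (le_max_right _ _) habs 2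
        _ = (z i - x i) ^ 2 := sq_abs _
    · -- ∑ Pᶜ ≤ ∑ univ
      apply Finset.sum_le_sum_of_subset_of_nonneg (Finset.subset_univ _)
      intro i _ _
      exact sq_nonneg _
  -- conclude
  have hle : Metric.infDist z (Omega n s) ≤ Real.sqrt (∑ j ∈ T₀, v j) := by
    rw [← hdistx₀]
    exact Metric.infDist_le_dist_of_mem hx₀Ω
  have hge : Real.sqrt (∑ j ∈ T₀, v j) ≤ Metric.infDist z (Omega n s) := by
    by_contra h
    push_neg at h
    obtain ⟨y, hy, hylt⟩ := (Metric.infDist_lt_iff hne).mp h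
    exact absurd hylt (not_lt.mpr (hlow y hy))
  have heq : Metric.infDist z (Omega n s) = Real.sqrt (∑ j ∈ T₀, v j) :=
    le_antisymm hle hge
  rw [heq, Real.sq_sqrt hA0, hRHS]
end
end

section
/- For every z ∈ ℝ^n and every x ∈ Π^B_{Ω_s}(z), the projection residual is orthogonal to the projection: ⟨x, z − x⟩ = 0. -/
open scoped BigOperators RealInnerProductSpace

noncomputable section

lemma smul_mem_Omega (n s : ℕ) (x : EuclideanSpace ℝ (Fin n)) (hx : x ∈ Omega n s)
    {t : ℝ} (ht : 0 < t) : t • x ∈ Omega n s := by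
  simp only [Omega, Set.mem_setOf_eq] at hx ⊢
  have : (Finset.univ.filter fun i => 0 < (t • x) i) =
      (Finset.univ.filter fun i => 0 < x i) := by
    apply Finset.filter_congr
    intro i _
    have : (t • x) i = t * x i := rfl
    rw [this]
    simp [mul_pos_iff_of_pos_left, ht]
  rwa [this]

/-- For every `z ∈ ℝ^n` and every `x ∈ Π^B_{Ω_s}(z)`, `⟨x, z − x⟩ = 0`. -/
theorem stmt_3 (n s : ℕ) (hn : 0 < n) (hs : 0 < s) (hsn : s ≤ n)
    (z x : EuclideanSpace ℝ (Fin n)) (hx : x ∈ projSet n s z) :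
    ⟪x, z - x⟫ = 0 := by
  obtain ⟨hmem, hdist⟩ := hx
  by_cases hx0 : x = 0
  · simp [hx0]
  · have hb : (0:ℝ) < ‖x‖^2 := by
      have := norm_pos_iff.mpr hx0
      positivity
    have key : ∀ t : ℝ, 0 < t →
        ‖z - x‖^2 ≤ ‖z‖^2 - 2*t*⟪z,x⟫ + t^2*‖x‖^2 := by
      intro t ht
      have h1 : t • x ∈ Omega n s := smul_mem_Omega n s x hmem ht
      have h2 : ‖z - x‖ ≤ ‖z - t • x‖ := by
        rw [hdist]
        rw [← dist_eq_norm]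
        exact Metric.infDist_le_dist_of_mem h1
      have h3 : ‖z - x‖^2 ≤ ‖z - t • x‖^2 := by
        apply sq_le_sq' _ h2
        have := norm_nonneg (z - x)
        linarith [norm_nonneg (z - t • x)]
      calc ‖z - x‖^2 ≤ ‖z - t • x‖^2 := h3
        _ = ‖z‖^2 - 2*t*⟪z,x⟫ + t^2*‖x‖^2 := by
            rw [norm_sub_sq_real, real_inner_smul_right, norm_smul,
              Real.norm_eq_abs, abs_of_pos ht]
            ring
    set c := ⟪z,x⟫ with hc
    set b := ‖x‖^2 with hbdef
    have hzx : ‖z - x‖^2 = ‖z‖^2 - 2*c + b := by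
      rw [norm_sub_sq_real]
    have h12 : ‖z - x‖^2 ≤ ‖z‖^2 - 2*(1/2)*c + (1/2)^2*b := key (1/2) (by norm_num)
    have hcpos : 0 < c := by nlinarith
    set t0 : ℝ := c/b with ht0def
    have ht0 : t0 * b = c := by
      rw [ht0def]; field_simp
    have h2 : ‖z - x‖^2 ≤ ‖z‖^2 - 2*t0*c + t0^2*b := key t0 (by positivity)
    have hcb : c = b := by
      have h3 : b*(-2*c + b) ≤ b*(-2*t0*c + t0^2*b) := by nlinarith
      have h5 : b*(-2*t0*c + t0^2*b) = -(c^2) := by rw [← ht0]; ring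
      nlinarith [sq_nonneg (c - b)]
    have hfin : ⟪x, z - x⟫ = c - b := by
      rw [hc, hbdef, inner_sub_right, real_inner_self_eq_norm_sq, real_inner_comm]
    rw [hfin, hcb]
    ring
end
end

section
/- Let D ⊆ ℝ^d be a nonempty closed set and let Π : ℝ^d → ℝ^d be a selection of the metric projection onto D, i.e. Π(θ) ∈ D and ‖θ − Π(θ)‖ = dist(θ, D) for all θ. Define k(θ) := (1/2)‖Π(θ)‖² and q(θ) := (1/2)‖θ − Π(θ)‖². Assume: (a) ⟨Π(θ), θ − Π(θ)⟩ = 0 for all θ ∈ ℝ^d; (b) for all θ, t ∈ ℝ^d, k(θ) − k(t) ≥ ⟨Π(t), θ − t⟩ (Π(t) is a subgradient of k at t). Then for every fixed t ∈ ℝ^d, the function q_m(θ, t) := (1/2)‖θ‖² − ⟨Π(t), θ − t⟩ − k(t) is a majorization of q at t, i.e. q_m(t, t) = q(t) and q_m(θ, t) ≥ q(θ) for all θ ∈ ℝ^d. -/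
open scoped BigOperators RealInnerProductSpace

noncomputable section

/-- Majorization: if `Π` is a selection of the metric projection onto a nonempty closed set
`D ⊆ ℝ^d` satisfying (a) `⟨Π(θ), θ − Π(θ)⟩ = 0` and (b) `k(θ) − k(t) ≥ ⟨Π(t), θ − t⟩`
where `k(θ) = (1/2)‖Π(θ)‖²`, then for every `t` the function
`q_m(θ, t) = (1/2)‖θ‖² − ⟨Π(t), θ − t⟩ − k(t)` majorizes `q(θ) = (1/2)‖θ − Π(θ)‖²` at `t`. -/
theorem stmt_7 (d : ℕ) (D : Set (EuclideanSpace ℝ (Fin d)))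
    (hD : D.Nonempty) (hDclosed : IsClosed D)
    (Pi : EuclideanSpace ℝ (Fin d) → EuclideanSpace ℝ (Fin d))
    (hmem : ∀ θ, Pi θ ∈ D)
    (hdist : ∀ θ, ‖θ - Pi θ‖ = Metric.infDist θ D)
    (ha : ∀ θ, ⟪Pi θ, θ - Pi θ⟫ = 0)
    (hb : ∀ θ t : EuclideanSpace ℝ (Fin d),
      (1 / 2) * ‖Pi θ‖ ^ 2 - (1 / 2) * ‖Pi t‖ ^ 2 ≥ ⟪Pi t, θ - t⟫) :
    ∀ t : EuclideanSpace ℝ (Fin d),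
      ((1 / 2) * ‖t‖ ^ 2 - ⟪Pi t, t - t⟫ - (1 / 2) * ‖Pi t‖ ^ 2
          = (1 / 2) * ‖t - Pi t‖ ^ 2) ∧
      ∀ θ : EuclideanSpace ℝ (Fin d),
        (1 / 2) * ‖θ‖ ^ 2 - ⟪Pi t, θ - t⟫ - (1 / 2) * ‖Pi t‖ ^ 2
          ≥ (1 / 2) * ‖θ - Pi θ‖ ^ 2 := by
  have key : ∀ θ : EuclideanSpace ℝ (Fin d),
      ‖θ - Pi θ‖ ^ 2 = ‖θ‖ ^ 2 - ‖Pi θ‖ ^ 2 := by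
    intro θ
    have h := ha θ
    rw [inner_sub_right, real_inner_self_eq_norm_sq] at h
    have := @norm_sub_sq_real (EuclideanSpace ℝ (Fin d)) _ _ θ (Pi θ)
    rw [real_inner_comm] at this
    nlinarith [this]
  intro t
  constructor
  · rw [key t, sub_self, inner_zero_right]; ring
  · intro θ
    have hb' := hb θ t
    rw [key θ]
    linarith
end
end

section
/- Let Q̄ be a real n × (m+1) matrix, 1_n ∈ ℝ^n the all-ones vector, and define p(θ) := (1/2)·dist(1_n − Q̄θ, Ω_s)² for θ ∈ ℝ^{m+1}. Then for every fixed θ̃ ∈ ℝ^{m+1} and every projection x̃ ∈ Π^B_{Ω_s}(1_n − Q̄θ̃), the function p_m(θ, θ̃) := (1/2)‖1_n − Q̄θ‖² − (1/2)‖x̃‖² + ⟨Q̄ᵀ x̃, θ − θ̃⟩ is a majorization of p at θ̃: p_m(θ̃, θ̃) = p(θ̃) and p_m(θ, θ̃) ≥ p(θ) for all θ ∈ ℝ^{m+1}. -/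
open scoped BigOperators Matrix

noncomputable section

/-- Regard a plain vector in `Fin n → ℝ` as an element of Euclidean space. -/
def toEuc {n : ℕ} (v : Fin n → ℝ) : EuclideanSpace ℝ (Fin n) :=
  (WithLp.equiv 2 (Fin n → ℝ)).symm v

/-- `Ω_s` is a cone: it is closed under nonnegative scaling. -/
lemma cone_mem {n s : ℕ} {x : EuclideanSpace ℝ (Fin n)} (hx : x ∈ Omega n s)
    {t : ℝ} (ht : 0 ≤ t) : t • x ∈ Omega n s := by
  rcases eq_or_lt_of_le ht with h | h
  · simp [Omega, ← h]
  · have key : ∀ i : Fin n, (0 < (t • x) i) ↔ 0 < x i := by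
      intro i
      have h1 : (t • x) i = t * x i := rfl
      rw [h1, mul_pos_iff_of_pos_left h]
    have hset : (Finset.univ.filter fun i => 0 < (t • x) i)
        = (Finset.univ.filter fun i => 0 < x i) := by
      ext i
      simp only [Finset.mem_filter, Finset.mem_univ, true_and]
      exact key i
    simp only [Omega, Set.mem_setOf_eq] at hx ⊢
    rw [hset]; exact hx

lemma inner_sum' {n : ℕ} (u v : EuclideanSpace ℝ (Fin n)) :
    (inner ℝ u v : ℝ) = ∑ i, u i * v i := by
  simp [PiLp.inner_apply, RCLike.inner_apply, mul_comm]

/-- The key orthogonality property of projection onto a cone: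
`⟪z, x̃⟫ = ‖x̃‖²`. -/
lemma proj_inner_eq {n s : ℕ} {z xt : EuclideanSpace ℝ (Fin n)}
    (hxt : xt ∈ projSet n s z) : (inner ℝ z xt : ℝ) = ‖xt‖ ^ 2 := by
  obtain ⟨hmem, hdist⟩ := hxt
  set a : ℝ := ‖xt‖ ^ 2 with ha
  set b : ℝ := (inner ℝ z xt : ℝ) with hb
  have ha0 : 0 ≤ a := by positivity
  -- quadratic inequality from the projection property
  have hq : ∀ t : ℝ, 0 ≤ t → 0 ≤ a * t ^ 2 - 2 * b * t + (2 * b - a) := by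
    intro t ht
    have hmem' : t • xt ∈ Omega n s := cone_mem hmem ht
    have h1 : ‖z - xt‖ ≤ ‖z - t • xt‖ := by
      rw [hdist, ← dist_eq_norm]
      exact Metric.infDist_le_dist_of_mem hmem'
    have h2 : ‖z - xt‖ ^ 2 ≤ ‖z - t • xt‖ ^ 2 := by
      have := norm_nonneg (z - xt)
      nlinarith
    have e1 : ‖z - xt‖ ^ 2 = ‖z‖ ^ 2 - 2 * b + a := by
      rw [norm_sub_sq_real]
    have e2 : ‖z - t • xt‖ ^ 2 = ‖z‖ ^ 2 - 2 * (t * b) + t ^ 2 * a := by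
      rw [norm_sub_sq_real, real_inner_smul_right, norm_smul, Real.norm_eq_abs,
        mul_pow, sq_abs]
    nlinarith
  -- conclude b = a
  rcases eq_or_lt_of_le ha0 with h0 | h0
  · -- a = 0 means xt = 0, hence b = 0
    have hxt0 : xt = 0 := by
      have : ‖xt‖ = 0 := by nlinarith [norm_nonneg xt]
      exact norm_eq_zero.mp this
    rw [hb, hxt0, ha, hxt0]
    simp
  · -- a > 0
    have hbnn : 0 ≤ b := by
      by_contra hneg
      push_neg at hneg
      have := hq 0 le_rfl
      nlinarith
    have ht0 : (0:ℝ) ≤ b / a := div_nonneg hbnn h0.le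
    have hab : a * (b / a) = b := by field_simp
    have h := hq (b / a) ht0
    have hsq : a * ((b / a) - 1) ^ 2 ≤ 0 := by nlinarith
    have hsq0 : ((b / a) - 1) ^ 2 = 0 := by
      have := sq_nonneg ((b / a) - 1)
      nlinarith
    have : b / a = 1 := by
      have := pow_eq_zero_iff (n := 2) (by norm_num) |>.mp hsq0
      linarith
    have : b = a := by
      field_simp at this
      linarith [this]
    linarith

/-- With `p(θ) = (1/2)·dist(1_n − Q̄θ, Ω_s)²` and any projection
`x̃ ∈ Π^B_{Ω_s}(1_n − Q̄θ̃)`, the function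
`p_m(θ, θ̃) = (1/2)‖1_n − Q̄θ‖² − (1/2)‖x̃‖² + ⟨Q̄ᵀx̃, θ − θ̃⟩`
is a majorization of `p` at `θ̃`: it agrees with `p` at `θ̃` and dominates `p` everywhere. -/
theorem stmt_8 (n m s : ℕ) (hn : 0 < n) (hm : 0 < m) (hs : 0 < s) (hsn : s ≤ n)
    (Qb : Matrix (Fin n) (Fin (m + 1)) ℝ) (θt : Fin (m + 1) → ℝ)
    (xt : EuclideanSpace ℝ (Fin n))
    (hxt : xt ∈ projSet n s (toEuc (1 - Qb.mulVec θt))) :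
    ((1 / 2) * ‖toEuc (1 - Qb.mulVec θt)‖ ^ 2 - (1 / 2) * ‖xt‖ ^ 2
        + (Qb.transpose.mulVec fun i => xt i) ⬝ᵥ (θt - θt)
      = (1 / 2) * Metric.infDist (toEuc (1 - Qb.mulVec θt)) (Omega n s) ^ 2) ∧
    ∀ θ : Fin (m + 1) → ℝ,
      (1 / 2) * ‖toEuc (1 - Qb.mulVec θ)‖ ^ 2 - (1 / 2) * ‖xt‖ ^ 2
          + (Qb.transpose.mulVec fun i => xt i) ⬝ᵥ (θ - θt)
        ≥ (1 / 2) * Metric.infDist (toEuc (1 - Qb.mulVec θ)) (Omega n s) ^ 2 := by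
  set z : EuclideanSpace ℝ (Fin n) := toEuc (1 - Qb.mulVec θt) with hz
  have hmem : xt ∈ Omega n s := hxt.1
  have hdist : ‖z - xt‖ = Metric.infDist z (Omega n s) := hxt.2
  have hba : (inner ℝ z xt : ℝ) = ‖xt‖ ^ 2 := proj_inner_eq hxt
  -- a convenient formula for the dot product term
  have hdot : ∀ θ : Fin (m + 1) → ℝ,
      (Qb.transpose.mulVec fun i => xt i) ⬝ᵥ (θ - θt)
        = (inner ℝ xt (z - toEuc (1 - Qb.mulVec θ)) : ℝ) := by
    intro θ
    rw [inner_sum', Matrix.mulVec_transpose, ← Matrix.dotProduct_mulVec]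
    simp only [dotProduct, Matrix.mulVec_sub, Pi.sub_apply, PiLp.sub_apply, hz, toEuc,
      WithLp.equiv_symm_apply, PiLp.toLp_apply, Pi.one_apply]
    apply Finset.sum_congr rfl
    intro i _
    ring
  constructor
  · -- equality at θ = θt
    have hd : (Qb.transpose.mulVec fun i => xt i) ⬝ᵥ (θt - θt) = 0 := by
      simp [sub_self]
    rw [hd, ← hdist]
    have e1 : ‖z - xt‖ ^ 2 = ‖z‖ ^ 2 - 2 * (inner ℝ z xt : ℝ) + ‖xt‖ ^ 2 := by
      rw [norm_sub_sq_real]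
    rw [hba] at e1
    linarith
  · intro θ
    set w : EuclideanSpace ℝ (Fin n) := toEuc (1 - Qb.mulVec θ) with hw
    have hd := hdot θ
    rw [hd]
    have hle : Metric.infDist w (Omega n s) ≤ ‖w - xt‖ := by
      rw [← dist_eq_norm]
      exact Metric.infDist_le_dist_of_mem hmem
    have hnn : 0 ≤ Metric.infDist w (Omega n s) := Metric.infDist_nonneg
    have h2 : Metric.infDist w (Omega n s) ^ 2 ≤ ‖w - xt‖ ^ 2 := by nlinarith
    have e1 : ‖w - xt‖ ^ 2 = ‖w‖ ^ 2 - 2 * (inner ℝ w xt : ℝ) + ‖xt‖ ^ 2 := by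
      rw [norm_sub_sq_real]
    have e2 : (inner ℝ xt (z - w) : ℝ) = (inner ℝ z xt : ℝ) - (inner ℝ w xt : ℝ) := by
      rw [inner_sub_right, real_inner_comm xt z, real_inner_comm xt w]
    rw [e2, hba]
    linarith
end
end

section
/- If z̃ ∈ ℝ^n has pairwise distinct entries, then the projection set Π^B_{Ω_s}(z̃) contains exactly one element. -/
open scoped BigOperators

noncomputable section

/-- Existence of a "top `s`" subset for an injective real-valued function. -/
lemma exists_top {α : Type*} [DecidableEq α] (f : α → ℝ) (hf : Function.Injective f) :
    ∀ (s : ℕ) (P : Finset α), s ≤ P.card →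
      ∃ S, S ⊆ P ∧ S.card = s ∧ ∀ i ∈ S, ∀ j ∈ P \ S, f j < f i := by
  intro s
  induction s with
  | zero => intro P _; exact ⟨∅, Finset.empty_subset _, rfl, by simp⟩
  | succ s ih =>
    intro P hs
    have hne : P.Nonempty := Finset.card_pos.mp (by omega)
    obtain ⟨i₀, hi₀P, hi₀max⟩ := P.exists_max_image f hne
    have hcard : s ≤ (P.erase i₀).card := by
      rw [Finset.card_erase_of_mem hi₀P]; omega
    obtain ⟨S', hS'sub, hS'card, hS'sep⟩ := ih (P.erase i₀) hcard
    have hi₀S' : i₀ ∉ S' := fun h => (Finset.mem_erase.mp (hS'sub h)).1 rfl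
    refine ⟨insert i₀ S', ?_, ?_, ?_⟩
    · exact Finset.insert_subset hi₀P (hS'sub.trans (Finset.erase_subset _ _))
    · rw [Finset.card_insert_of_notMem hi₀S', hS'card]
    · intro i hi j hj
      rw [Finset.mem_sdiff, Finset.mem_insert, not_or] at hj
      obtain ⟨hjP, hji₀, hjS'⟩ := hj
      rcases Finset.mem_insert.mp hi with rfl | hiS'
      · exact lt_of_le_of_ne (hi₀max j hjP) (fun h => hji₀ (hf h))
      · exact hS'sep i hiS' j (Finset.mem_sdiff.mpr ⟨Finset.mem_erase.mpr ⟨hji₀, hjP⟩, hjS'⟩)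

/-- A strict maximality property of the top set. -/
lemma sum_lt_top {α : Type*} [DecidableEq α] (g : α → ℝ) (S U : Finset α)
    (hcard : U.card ≤ S.card) (hne : U ≠ S)
    (hpos : ∀ i ∈ S, 0 < g i)
    (hsep : ∀ i ∈ S, ∀ j ∈ U \ S, g j < g i) :
    ∑ j ∈ U, g j < ∑ i ∈ S, g i := by
  have hU : ∑ j ∈ U ∩ S, g j + ∑ j ∈ U \ S, g j = ∑ j ∈ U, g j :=
    Finset.sum_inter_add_sum_sdiff U S g
  have hS : ∑ j ∈ S ∩ U, g j + ∑ j ∈ S \ U, g j = ∑ j ∈ S, g j :=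
    Finset.sum_inter_add_sum_sdiff S U g
  have hic : U ∩ S = S ∩ U := Finset.inter_comm U S
  have hcards : (U \ S).card ≤ (S \ U).card := by
    have h1 : (U ∩ S).card + (U \ S).card = U.card := Finset.card_inter_add_card_sdiff U S
    have h2 : (S ∩ U).card + (S \ U).card = S.card := Finset.card_inter_add_card_sdiff S U
    have : (U ∩ S).card = (S ∩ U).card := by rw [hic]
    omega
  have hkey : ∑ j ∈ U \ S, g j < ∑ j ∈ S \ U, g j := by
    rcases Finset.eq_empty_or_nonempty (U \ S) with hUS | hUS
    · have hSU : (S \ U).Nonempty := by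
        rcases Finset.eq_empty_or_nonempty (S \ U) with h | h
        · exfalso
          apply hne
          apply Finset.Subset.antisymm
          · intro j hj
            by_contra hjS
            exact absurd (Finset.mem_sdiff.mpr ⟨hj, hjS⟩) (by simp [hUS])
          · intro j hj
            by_contra hjU
            exact absurd (Finset.mem_sdiff.mpr ⟨hj, hjU⟩) (by simp [h])
        · exact h
      rw [hUS, Finset.sum_empty]
      exact Finset.sum_pos (fun i hi => hpos i (Finset.mem_sdiff.mp hi).1) hSU
    · have hSU : (S \ U).Nonempty := by
        rw [← Finset.card_pos] at hUS ⊢; omega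
      obtain ⟨m, hm, hmin⟩ := (S \ U).exists_min_image g hSU
      have hmS : m ∈ S := (Finset.mem_sdiff.mp hm).1
      have h1 : ∑ j ∈ U \ S, g j < (U \ S).card • g m := by
        have := Finset.sum_lt_sum_of_nonempty hUS (fun j hj => hsep m hmS j hj)
        rwa [Finset.sum_const] at this
      have h2 : (U \ S).card • g m ≤ (S \ U).card • g m :=
        nsmul_le_nsmul_left (le_of_lt (hpos m hmS)) hcards
      have h3 : (S \ U).card • g m ≤ ∑ j ∈ S \ U, g j :=
        Finset.card_nsmul_le_sum _ _ _ (fun j hj => hmin j hj)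
      linarith
  have hicsum : ∑ j ∈ U ∩ S, g j = ∑ j ∈ S ∩ U, g j := by rw [hic]
  linarith

/-- If `z̃ ∈ ℝ^n` has pairwise distinct entries, then `Π^B_{Ω_s}(z̃)` is a singleton. -/
theorem stmt_10 (n s : ℕ) (hn : 0 < n) (hs : 0 < s) (hsn : s ≤ n)
    (zt : EuclideanSpace ℝ (Fin n))
    (hdistinct : ∀ i j : Fin n, i ≠ j → zt i ≠ zt j) :
    ∃! x : EuclideanSpace ℝ (Fin n), x ∈ projSet n s zt := by
  classical
  have hinj : Function.Injective zt := by
    intro i j h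
    by_contra hc
    exact hdistinct i j hc h
  have norm_eq : ∀ x : EuclideanSpace ℝ (Fin n),
      ‖zt - x‖ = Real.sqrt (∑ i, (zt i - x i) ^ 2) := by
    intro x
    rw [EuclideanSpace.norm_eq]
    congr 1
    apply Finset.sum_congr rfl
    intro i _
    rw [show (zt - x) i = zt i - x i from rfl, Real.norm_eq_abs, sq_abs]
  set P : Finset (Fin n) := Finset.univ.filter (fun i => 0 < zt i) with hPdef
  by_cases hcase : P.card ≤ s
  · -- zt itself is in Omega
    have hzt : zt ∈ Omega n s := hcase
    refine ⟨zt, ⟨hzt, ?_⟩, ?_⟩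
    · rw [sub_self, norm_zero, Metric.infDist_zero_of_mem hzt]
    · rintro y ⟨hy, hnorm⟩
      rw [Metric.infDist_zero_of_mem hzt] at hnorm
      have h0 : zt - y = 0 := norm_eq_zero.mp hnorm
      have := sub_eq_zero.mp h0
      exact this.symm
  · push_neg at hcase
    obtain ⟨S, hSP, hScard, hsep⟩ := exists_top zt hinj s P (le_of_lt hcase)
    have hSpos : ∀ i ∈ S, 0 < zt i := fun i hi => (Finset.mem_filter.mp (hSP hi)).2
    set xs : EuclideanSpace ℝ (Fin n) := WithLp.toLp 2 (fun i => if i ∈ S then zt i else min (zt i) 0) with hxsdef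
    have hxsΩ : xs ∈ Omega n s := by
      have hfil : Finset.univ.filter (fun i => 0 < xs i) = S := by
        ext i
        simp only [Finset.mem_filter, Finset.mem_univ, true_and, hxsdef]
        constructor
        · intro hi
          by_contra hiS
          rw [if_neg hiS] at hi
          simp only [lt_min_iff] at hi
          exact lt_irrefl 0 hi.2
        · intro hi
          rw [if_pos hi]
          exact hSpos i hi
      show (Finset.univ.filter (fun i => 0 < xs i)).card ≤ s
      rw [hfil, hScard]
    have hDxs : ∑ i, (zt i - xs i) ^ 2 = ∑ i ∈ P \ S, zt i ^ 2 := by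
      have hpt : ∀ i : Fin n, (zt i - xs i) ^ 2 = if i ∈ P \ S then zt i ^ 2 else 0 := by
        intro i
        by_cases hiS : i ∈ S
        · have : i ∉ P \ S := fun h => (Finset.mem_sdiff.mp h).2 hiS
          rw [if_neg this, hxsdef]
          simp [hiS]
        · by_cases hiP : 0 < zt i
          · have hiPm : i ∈ P := Finset.mem_filter.mpr ⟨Finset.mem_univ i, hiP⟩
            rw [if_pos (Finset.mem_sdiff.mpr ⟨hiPm, hiS⟩), hxsdef]
            simp only [if_neg hiS]
            rw [min_eq_right (le_of_lt hiP)]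
            ring
          · have hiPm : i ∉ P := fun h => hiP (Finset.mem_filter.mp h).2
            have : i ∉ P \ S := fun h => hiPm (Finset.mem_sdiff.mp h).1
            rw [if_neg this, hxsdef]
            simp only [if_neg hiS]
            rw [min_eq_left (not_lt.mp hiP)]
            ring
      rw [Finset.sum_congr rfl (fun i _ => hpt i), Finset.sum_ite_mem, Finset.univ_inter]
    -- key inequality
    have key : ∀ x : EuclideanSpace ℝ (Fin n), x ∈ Omega n s →
        (∑ i ∈ P \ S, zt i ^ 2) ≤ (∑ i, (zt i - x i) ^ 2) ∧
        ((∑ i, (zt i - x i) ^ 2) = (∑ i ∈ P \ S, zt i ^ 2) → x = xs) := by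
      intro x hx
      set T : Finset (Fin n) := Finset.univ.filter (fun i => 0 < x i) with hTdef
      have hT : T.card ≤ s := hx
      have hxle : ∀ i ∈ P \ T, x i ≤ 0 := by
        intro i hi
        have := (Finset.mem_sdiff.mp hi).2
        simp only [hTdef, Finset.mem_filter, Finset.mem_univ, true_and] at this
        exact not_lt.mp this
      have hPpos : ∀ i ∈ P, 0 < zt i := fun i hi => (Finset.mem_filter.mp hi).2
      have h1 : ∑ i ∈ P \ T, (zt i - x i) ^ 2 ≤ ∑ i, (zt i - x i) ^ 2 :=
        Finset.sum_le_sum_of_subset_of_nonneg (Finset.subset_univ _)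
          (fun i _ _ => sq_nonneg _)
      have h2 : ∑ i ∈ P \ T, zt i ^ 2 ≤ ∑ i ∈ P \ T, (zt i - x i) ^ 2 := by
        apply Finset.sum_le_sum
        intro i hi
        have hz := hPpos i (Finset.mem_sdiff.mp hi).1
        have hxl := hxle i hi
        apply pow_le_pow_left₀ (le_of_lt hz)
        linarith
      -- relate sums over P \ T and P \ S
      have hPT : P \ T = P \ (P ∩ T) := (Finset.sdiff_inter_self_left P T).symm
      have hsumPT : ∑ i ∈ P \ T, zt i ^ 2 = ∑ i ∈ P, zt i ^ 2 - ∑ i ∈ P ∩ T, zt i ^ 2 := by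
        rw [hPT, Finset.sum_sdiff_eq_sub (Finset.inter_subset_left)]
      have hsumPS : ∑ i ∈ P \ S, zt i ^ 2 = ∑ i ∈ P, zt i ^ 2 - ∑ i ∈ S, zt i ^ 2 := by
        rw [Finset.sum_sdiff_eq_sub hSP]
      have hstrict : P ∩ T ≠ S → ∑ i ∈ P ∩ T, zt i ^ 2 < ∑ i ∈ S, zt i ^ 2 := by
        intro hne
        refine sum_lt_top _ _ _ ?_ hne ?_ ?_
        · calc (P ∩ T).card ≤ T.card := Finset.card_le_card Finset.inter_subset_right
            _ ≤ s := hT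
            _ = S.card := hScard.symm
        · intro i hi
          exact pow_pos (hSpos i hi) 2
        · intro i hi j hj
          have hjPS : j ∈ P \ S := by
            rw [Finset.mem_sdiff] at hj ⊢
            exact ⟨Finset.mem_of_mem_inter_left hj.1, hj.2⟩
          have hlt := hsep i hi j hjPS
          have hjpos := hPpos j (Finset.mem_sdiff.mp hjPS).1
          exact pow_lt_pow_left₀ hlt (le_of_lt hjpos) (by norm_num)
      have h3 : ∑ i ∈ P \ S, zt i ^ 2 ≤ ∑ i ∈ P \ T, zt i ^ 2 := by
        by_cases hU : P ∩ T = S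
        · rw [hsumPT, hsumPS, hU]
        · have := hstrict hU
          rw [hsumPT, hsumPS]
          linarith
      constructor
      · linarith
      · intro heq
        have hU : P ∩ T = S := by
          by_contra hne
          have := hstrict hne
          have h3' : ∑ i ∈ P \ S, zt i ^ 2 < ∑ i ∈ P \ T, zt i ^ 2 := by
            rw [hsumPT, hsumPS]; linarith
          linarith
        have hPTS : P \ T = P \ S := by rw [hPT, hU]
        have e1 : ∑ i, (zt i - x i) ^ 2 = ∑ i ∈ P \ T, (zt i - x i) ^ 2 := by linarith
        have e2 : ∑ i ∈ P \ T, (zt i - x i) ^ 2 = ∑ i ∈ P \ T, zt i ^ 2 := by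
          have h3' : ∑ i ∈ P \ T, zt i ^ 2 = ∑ i ∈ P \ S, zt i ^ 2 := by rw [hPTS]
          linarith
        -- off P \ T, x agrees with zt
        have hoff : ∀ i, i ∉ P \ T → x i = zt i := by
          intro i hi
          have hzero : ∑ j ∈ Finset.univ \ (P \ T), (zt j - x j) ^ 2 = 0 := by
            rw [Finset.sum_sdiff_eq_sub (Finset.subset_univ _)]
            linarith
          have := (Finset.sum_eq_zero_iff_of_nonneg
            (fun j _ => sq_nonneg (zt j - x j))).mp hzero i
            (Finset.mem_sdiff.mpr ⟨Finset.mem_univ i, hi⟩)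
          have h0 : zt i - x i = 0 := by
            have := sq_eq_zero_iff.mp this
            exact this
          linarith
        -- on P \ T, x is zero
        have hon : ∀ i ∈ P \ T, x i = 0 := by
          intro i hi
          have hz := hPpos i (Finset.mem_sdiff.mp hi).1
          have hxl := hxle i hi
          have hzero : ∑ j ∈ P \ T, ((zt j - x j) ^ 2 - zt j ^ 2) = 0 := by
            rw [Finset.sum_sub_distrib]
            linarith
          have hterm := (Finset.sum_eq_zero_iff_of_nonneg (fun j hj => by
            have hzj := hPpos j (Finset.mem_sdiff.mp hj).1
            have hxj := hxle j hj
            have : zt j ≤ zt j - x j := by linarith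
            have := pow_le_pow_left₀ (le_of_lt hzj) this 2
            linarith)).mp hzero i hi
          have hge : 0 ≤ x i := by nlinarith
          linarith
        ext i
        by_cases hiS : i ∈ S
        · have hiPT : i ∉ P \ T := by rw [hPTS]; exact fun h => (Finset.mem_sdiff.mp h).2 hiS
          rw [hoff i hiPT, hxsdef]
          simp [hiS]
        · by_cases hiP : i ∈ P
          · have hiPT : i ∈ P \ T := by rw [hPTS]; exact Finset.mem_sdiff.mpr ⟨hiP, hiS⟩
            rw [hon i hiPT, hxsdef]
            simp only [if_neg hiS]
            rw [min_eq_right (le_of_lt (hPpos i hiP))]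
          · have hiPT : i ∉ P \ T := fun h => hiP (Finset.mem_sdiff.mp h).1
            rw [hoff i hiPT, hxsdef]
            simp only [if_neg hiS]
            have : zt i ≤ 0 := by
              by_contra h
              exact hiP (Finset.mem_filter.mpr ⟨Finset.mem_univ i, not_le.mp h⟩)
            rw [min_eq_left this]
    -- assemble
    have hΩne : (Omega n s).Nonempty := ⟨xs, hxsΩ⟩
    have hle : Metric.infDist zt (Omega n s) ≤ ‖zt - xs‖ := by
      rw [← dist_eq_norm]
      exact Metric.infDist_le_dist_of_mem hxsΩ
    have hge : ‖zt - xs‖ ≤ Metric.infDist zt (Omega n s) := by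
      by_contra hlt
      push_neg at hlt
      obtain ⟨y, hy, hdy⟩ := (Metric.infDist_lt_iff hΩne).mp hlt
      rw [dist_eq_norm, norm_eq, norm_eq] at hdy
      have : Real.sqrt (∑ i, (zt i - xs i) ^ 2) ≤ Real.sqrt (∑ i, (zt i - y i) ^ 2) := by
        apply Real.sqrt_le_sqrt
        rw [hDxs]
        exact (key y hy).1
      linarith
    have hinf : ‖zt - xs‖ = Metric.infDist zt (Omega n s) := le_antisymm hge hle
    refine ⟨xs, ⟨hxsΩ, hinf⟩, ?_⟩
    rintro y ⟨hyΩ, hynorm⟩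
    have hny : ‖zt - y‖ = ‖zt - xs‖ := by rw [hynorm, hinf]
    have hDy : ∑ i, (zt i - y i) ^ 2 = ∑ i ∈ P \ S, zt i ^ 2 := by
      have h1 : Real.sqrt (∑ i, (zt i - y i) ^ 2) = Real.sqrt (∑ i, (zt i - xs i) ^ 2) := by
        rw [← norm_eq, ← norm_eq, hny]
      have h2 := congrArg (fun t => t ^ 2) h1
      simp only [Real.sq_sqrt (Finset.sum_nonneg (fun i _ => sq_nonneg _))] at h2
      rw [h2, hDxs]
    exact (key y hyΩ).2 hDy
end
end

section
/- Let (z_k) be a sequence in ℝ^n converging to z̃, where z̃ has pairwise distinct entries, and for each k let x_k ∈ Π^B_{Ω_s}(z_k) be any projection of z_k onto Ω_s. Then x_k converges to x̃, where x̃ is the unique element of Π^B_{Ω_s}(z̃). -/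
open scoped BigOperators Topology

noncomputable section

lemma omega_closed (n s : ℕ) : IsClosed (Omega n s) := by
  rw [← isOpen_compl_iff, isOpen_iff_mem_nhds]
  intro x hx
  have hT : ∀ i ∈ Finset.univ.filter (fun i => 0 < x i),
      {y : EuclideanSpace ℝ (Fin n) | 0 < y i} ∈ 𝓝 x := by
    intro i hi
    have hc : Continuous fun y : EuclideanSpace ℝ (Fin n) => y i :=
      (EuclideanSpace.proj i).continuous
    have : IsOpen {y : EuclideanSpace ℝ (Fin n) | 0 < y i} := isOpen_lt continuous_const hc
    exact this.mem_nhds (Finset.mem_filter.mp hi).2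
  have hmem : (⋂ i ∈ Finset.univ.filter (fun i => 0 < x i),
      {y : EuclideanSpace ℝ (Fin n) | 0 < y i}) ∈ 𝓝 x :=
    (Filter.biInter_finset_mem _).mpr hT
  refine Filter.mem_of_superset hmem ?_
  intro y hy
  simp only [Set.mem_iInter] at hy
  simp only [Set.mem_compl_iff, Omega, Set.mem_setOf_eq, not_le] at hx ⊢
  have hsub : Finset.univ.filter (fun i => 0 < x i) ⊆ Finset.univ.filter (fun i => 0 < y i) := by
    intro i hi
    exact Finset.mem_filter.mpr ⟨Finset.mem_univ i, hy i hi⟩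
  exact lt_of_lt_of_le hx (Finset.card_le_card hsub)

lemma zero_mem_omega (n s : ℕ) : (0 : EuclideanSpace ℝ (Fin n)) ∈ Omega n s := by
  simp [Omega]

/-- If `z_k → z̃` where `z̃` has pairwise distinct entries, and `x_k ∈ Π^B_{Ω_s}(z_k)` for all
`k`, then `x_k → x̃`, the unique element of `Π^B_{Ω_s}(z̃)`. -/
theorem stmt_11 (n s : ℕ) (hn : 0 < n) (hs : 0 < s) (hsn : s ≤ n)
    (zseq : ℕ → EuclideanSpace ℝ (Fin n)) (zt : EuclideanSpace ℝ (Fin n))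
    (hdistinct : ∀ i j : Fin n, i ≠ j → zt i ≠ zt j)
    (hconv : Filter.Tendsto zseq Filter.atTop (𝓝 zt))
    (xseq : ℕ → EuclideanSpace ℝ (Fin n))
    (hxseq : ∀ k, xseq k ∈ projSet n s (zseq k))
    (xt : EuclideanSpace ℝ (Fin n)) (hxt : projSet n s zt = {xt}) :
    Filter.Tendsto xseq Filter.atTop (𝓝 xt) := by
  -- the sequence of norms of zseq is bounded
  obtain ⟨R, hR⟩ : ∃ R, ∀ k, ‖zseq k‖ ≤ R := by
    obtain ⟨R, hR⟩ := (hconv.norm).bddAbove_range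
    exact ⟨R, fun k => hR (Set.mem_range_self k)⟩
  -- xseq lives in the closed ball of radius 2R
  have hball : ∀ k, xseq k ∈ Metric.closedBall (0 : EuclideanSpace ℝ (Fin n)) (2 * R) := by
    intro k
    obtain ⟨hmem, heq⟩ := hxseq k
    have h1 : ‖zseq k - xseq k‖ ≤ ‖zseq k‖ := by
      rw [heq]
      calc Metric.infDist (zseq k) (Omega n s) ≤ dist (zseq k) 0 :=
            Metric.infDist_le_dist_of_mem (zero_mem_omega n s)
        _ = ‖zseq k‖ := by simp
    have h2 : ‖xseq k‖ - ‖zseq k‖ ≤ ‖xseq k - zseq k‖ := norm_sub_norm_le _ _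
    rw [norm_sub_rev] at h1
    simp only [Metric.mem_closedBall, dist_zero_right]
    have := hR k
    linarith
  -- limit points of xseq are projections of zt
  refine Filter.tendsto_of_subseq_tendsto fun ns hns => ?_
  obtain ⟨a, _, φ, hφ, haconv⟩ :=
    (ProperSpace.isCompact_closedBall (0 : EuclideanSpace ℝ (Fin n)) (2 * R)).tendsto_subseq
      (fun m => hball (ns m))
  refine ⟨φ, ?_⟩
  have hnsφ : Filter.Tendsto (fun m => ns (φ m)) Filter.atTop Filter.atTop :=
    hns.comp hφ.tendsto_atTop
  have hz' : Filter.Tendsto (fun m => zseq (ns (φ m))) Filter.atTop (𝓝 zt) :=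
    hconv.comp hnsφ
  have hx' : Filter.Tendsto (fun m => xseq (ns (φ m))) Filter.atTop (𝓝 a) := haconv
  -- a ∈ Omega
  have haOmega : a ∈ Omega n s :=
    (omega_closed n s).mem_of_tendsto hx'
      (Filter.Eventually.of_forall fun m => (hxseq (ns (φ m))).1)
  -- ‖zt - a‖ = infDist zt Ω
  have hnorm : Filter.Tendsto (fun m => ‖zseq (ns (φ m)) - xseq (ns (φ m))‖)
      Filter.atTop (𝓝 ‖zt - a‖) := (hz'.sub hx').norm
  have hinf : Filter.Tendsto (fun m => ‖zseq (ns (φ m)) - xseq (ns (φ m))‖)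
      Filter.atTop (𝓝 (Metric.infDist zt (Omega n s))) := by
    have : Filter.Tendsto (fun m => Metric.infDist (zseq (ns (φ m))) (Omega n s))
        Filter.atTop (𝓝 (Metric.infDist zt (Omega n s))) :=
      ((Metric.continuous_infDist_pt (Omega n s)).tendsto zt).comp hz'
    refine this.congr fun m => ?_
    exact ((hxseq (ns (φ m))).2).symm
  have heq : ‖zt - a‖ = Metric.infDist zt (Omega n s) :=
    tendsto_nhds_unique hnorm hinf
  have : a ∈ projSet n s zt := ⟨haOmega, heq⟩
  rw [hxt] at this
  rw [Set.mem_singleton_iff] at this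
  rw [this] at hx'
  exact hx'
end
end

section
/- With P, Q, Q̄ and F_ρ as in the context, let θ, θ⁺ ∈ ℝ^{m+1}, let x ∈ Π^B_{Ω_s}(1_n − Q̄θ) be any projection, and suppose θ⁺ satisfies the linear system (PᵀP + ρ Q̄ᵀQ̄) θ⁺ = ρ Q̄ᵀ(1_n − x) (i.e. θ⁺ is the unique minimizer of the majorization subproblem at θ). Then F_ρ(θ⁺) − F_ρ(θ) ≤ −(1/2)·⟨(PᵀP + ρ QᵀQ)(θ⁺ − θ), θ⁺ − θ⟩; in particular F_ρ(θ⁺) ≤ F_ρ(θ) − (λ_min/2)‖θ⁺ − θ‖², where λ_min > 0 is the smallest eigenvalue of PᵀP + ρ QᵀQ. (Note Q̄ᵀQ̄ = QᵀQ since the entries of y are ±1.) -/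
open scoped BigOperators Matrix

noncomputable section

lemma norm_toEuc_sq {k : ℕ} (v : Fin k → ℝ) : ‖toEuc v‖ ^ 2 = v ⬝ᵥ v := by
  rw [EuclideanSpace.norm_eq, Real.sq_sqrt (by positivity)]
  simp [toEuc, dotProduct, Real.norm_eq_abs, sq_abs, sq]

lemma dot_symm {k : ℕ} (M : Matrix (Fin k) (Fin k) ℝ) (hM : Mᵀ = M) (a b : Fin k → ℝ) :
    a ⬝ᵥ M.mulVec b = b ⬝ᵥ M.mulVec a := by
  rw [Matrix.dotProduct_mulVec, ← Matrix.mulVec_transpose, hM, dotProduct_comm]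

lemma dot_PtP {k l : ℕ} (P : Matrix (Fin l) (Fin k) ℝ) (u : Fin k → ℝ) :
    u ⬝ᵥ (Pᵀ * P).mulVec u = (P.mulVec u) ⬝ᵥ (P.mulVec u) := by
  rw [← Matrix.mulVec_mulVec, Matrix.dotProduct_mulVec, Matrix.vecMul_transpose]

lemma toEuc_sub {k : ℕ} (u : Fin k → ℝ) (x : EuclideanSpace ℝ (Fin k)) :
    toEuc u - x = toEuc (u - fun i => x i) := rfl

lemma dot_self_nonneg {k : ℕ} (v : Fin k → ℝ) : 0 ≤ v ⬝ᵥ v := by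
  simpa [dotProduct, ← sq] using Finset.sum_nonneg fun i _ => sq_nonneg (v i)

lemma dot_self_pos {k : ℕ} {v : Fin k → ℝ} (hv : v ≠ 0) : 0 < v ⬝ᵥ v :=
  lt_of_le_of_ne (dot_self_nonneg v)
    (fun h => hv (dotProduct_self_eq_zero.mp h.symm))

/-- The minimal eigenvalue of a symmetric positive definite matrix. -/
lemma eigen_min (k : ℕ) (M : Matrix (Fin (k+1)) (Fin (k+1)) ℝ) (hM : Mᵀ = M)
    (hPD : ∀ u : Fin (k+1) → ℝ, u ≠ 0 → 0 < u ⬝ᵥ M.mulVec u) :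
    ∃ lam : ℝ, 0 < lam ∧
      Module.End.HasEigenvalue (Matrix.toLin' M) lam ∧
      (∀ μ : ℝ, Module.End.HasEigenvalue (Matrix.toLin' M) μ → lam ≤ μ) ∧
      (∀ v : Fin (k+1) → ℝ, lam * ‖toEuc v‖ ^ 2 ≤ v ⬝ᵥ M.mulVec v) := by
  set E := EuclideanSpace ℝ (Fin (k+1))
  have hHerm : M.IsHermitian := by
    have : Mᴴ = Mᵀ := by ext i j; simp [Matrix.conjTranspose_apply]
    rw [Matrix.IsHermitian, this, hM]
  have hTsym : (Matrix.toEuclideanLin M).IsSymmetric :=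
    Matrix.isHermitian_iff_isSymmetric.mp hHerm
  set T := Matrix.toEuclideanLin M with hT
  have hTapp : ∀ v : Fin (k+1) → ℝ, T (toEuc v) = toEuc (M.mulVec v) := fun v => rfl
  have hinner : ∀ v : Fin (k+1) → ℝ, (inner ℝ (T (toEuc v)) (toEuc v) : ℝ) = v ⬝ᵥ M.mulVec v := by
    intro v
    rw [hTapp, toEuc, toEuc, WithLp.equiv_symm_apply, EuclideanSpace.inner_toLp_toLp]
    simp [dotProduct_comm]
  have hsurj : ∀ w : E, w = toEuc (fun i => w i) := fun w => rfl
  set lam : ℝ := ⨅ z : {x : E // x ≠ 0}, RCLike.re (inner ℝ (T z.1) z.1 : ℝ) / ‖(z.1 : E)‖ ^ 2 with hlam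
  have hray_pos : ∀ z : {x : E // x ≠ 0}, 0 < RCLike.re (inner ℝ (T z.1) z.1 : ℝ) / ‖(z.1 : E)‖ ^ 2 := by
    rintro ⟨w, hw⟩
    apply div_pos
    · have h0 : (fun i => w i : Fin (k+1) → ℝ) ≠ 0 := fun h => hw (by rw [hsurj w, h]; rfl)
      have := hPD _ h0
      rw [← hinner] at this
      rw [RCLike.re_to_real]; exact this
    · have : ‖w‖ ≠ 0 := norm_ne_zero_iff.mpr hw
      positivity
  have hbdd : BddBelow (Set.range fun z : {x : E // x ≠ 0} =>
      RCLike.re (inner ℝ (T z.1) z.1 : ℝ) / ‖(z.1 : E)‖ ^ 2) := by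
    refine ⟨0, ?_⟩; rintro _ ⟨z, rfl⟩; exact (hray_pos z).le
  have hlam_le : ∀ z : {x : E // x ≠ 0},
      lam ≤ RCLike.re (inner ℝ (T z.1) z.1 : ℝ) / ‖(z.1 : E)‖ ^ 2 := fun z => ciInf_le hbdd z
  have hEigT : Module.End.HasEigenvalue T lam := by
    have := hTsym.hasEigenvalue_iInf_of_finiteDimensional
    simp only [hlam, RCLike.re_to_real]; exact this
  have hquot : ∀ (μ : ℝ) (v : E), Module.End.HasEigenvector T μ v →
      RCLike.re (inner ℝ (T v) v : ℝ) / ‖v‖ ^ 2 = μ := by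
    intro μ v hv
    have h1 : T v = μ • v := Module.End.mem_eigenspace_iff.mp hv.1
    have hn : ‖v‖ ≠ 0 := norm_ne_zero_iff.mpr hv.2
    rw [h1, real_inner_smul_left, real_inner_self_eq_norm_sq]
    field_simp
    exact RCLike.re_to_real
  have hlam_pos : 0 < lam := by
    obtain ⟨v, hv⟩ := hEigT.exists_hasEigenvector
    rw [← hquot lam v hv]
    exact hray_pos ⟨v, hv.2⟩
  have htoLin : ∀ (μ : ℝ), Module.End.HasEigenvalue (Matrix.toLin' M) μ ↔
      Module.End.HasEigenvalue T μ := by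
    intro μ
    constructor
    · intro h
      obtain ⟨v, hv⟩ := h.exists_hasEigenvector
      have h1 : M.mulVec v = μ • v := by
        have := Module.End.mem_eigenspace_iff.mp hv.1
        rwa [Matrix.toLin'_apply] at this
      refine Module.End.hasEigenvalue_of_hasEigenvector (x := toEuc v) ⟨?_, ?_⟩
      · rw [Module.End.mem_eigenspace_iff, hTapp, h1]; rfl
      · exact fun h => hv.2 ((WithLp.toLp_eq_zero 2).mp h)
    · intro h
      obtain ⟨v, hv⟩ := h.exists_hasEigenvector
      have h1 : T v = μ • v := Module.End.mem_eigenspace_iff.mp hv.1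
      refine Module.End.hasEigenvalue_of_hasEigenvector (x := fun i => v i) ⟨?_, ?_⟩
      · rw [Module.End.mem_eigenspace_iff, Matrix.toLin'_apply]
        exact congrArg WithLp.ofLp h1
      · exact fun hh => hv.2 (by rw [hsurj v, hh]; rfl)
  refine ⟨lam, hlam_pos, (htoLin lam).mpr hEigT, ?_, ?_⟩
  · intro μ hμ
    obtain ⟨v, hv⟩ := ((htoLin μ).mp hμ).exists_hasEigenvector
    rw [← hquot μ v hv]
    exact hlam_le ⟨v, hv.2⟩
  · intro v
    rcases eq_or_ne v 0 with rfl | hv0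
    · simp [toEuc]
    · have hw : (toEuc v : E) ≠ 0 := fun h => hv0 ((WithLp.toLp_eq_zero 2).mp h)
      have := hlam_le ⟨toEuc v, hw⟩
      rw [hinner, RCLike.re_to_real] at this
      have hn : (0:ℝ) < ‖toEuc v‖ ^ 2 := by
        have : ‖toEuc v‖ ≠ 0 := norm_ne_zero_iff.mpr hw
        positivity
      rw [le_div_iff₀ hn] at this
      linarith

/-- `PᵀP + ρQᵀQ` is positive definite. -/
lemma posdef_aux (n m : ℕ) (hn : 0 < n) (ρ : ℝ) (hρ : 0 < ρ)
    (A : Matrix (Fin n) (Fin m) ℝ)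
    (P : Matrix (Fin m) (Fin (m + 1)) ℝ)
    (hP : ∀ i j, P i j = if (j : ℕ) = (i : ℕ) then 1 else 0)
    (Q : Matrix (Fin n) (Fin (m + 1)) ℝ)
    (hQ : ∀ i j, Q i j = if h : (j : ℕ) < m then A i ⟨j, h⟩ else 1) :
    ∀ u : Fin (m+1) → ℝ, u ≠ 0 → 0 < u ⬝ᵥ (Pᵀ * P + ρ • (Qᵀ * Q)).mulVec u := by
  intro u hu
  have hexp : u ⬝ᵥ (Pᵀ * P + ρ • (Qᵀ * Q)).mulVec u
      = (P.mulVec u) ⬝ᵥ (P.mulVec u) + ρ * ((Q.mulVec u) ⬝ᵥ (Q.mulVec u)) := by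
    rw [Matrix.add_mulVec, dotProduct_add, Matrix.smul_mulVec,
      dotProduct_smul, smul_eq_mul, dot_PtP, dot_PtP]
  have hPu : ∀ j : Fin m, (P.mulVec u) j = u (Fin.castSucc j) := by
    intro j
    show (∑ k, P j k * u k) = _
    rw [Finset.sum_eq_single (Fin.castSucc j)]
    · simp [hP]
    · intro b _ hb
      have : (b : ℕ) ≠ (j : ℕ) := fun h => hb (by ext; simpa using h)
      simp [hP, this]
    · simp
  rw [hexp]
  by_cases hPu0 : P.mulVec u = 0
  · have hsmall : ∀ j : Fin m, u (Fin.castSucc j) = 0 := by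
      intro j; have := congrFun hPu0 j; rwa [hPu] at this
    have hsmall' : ∀ j : Fin (m+1), (j : ℕ) < m → u j = 0 := by
      intro j hj
      have : j = Fin.castSucc ⟨j, hj⟩ := by ext; rfl
      rw [this]; exact hsmall _
    have hQu0 : Q.mulVec u ≠ 0 := by
      intro hq
      apply hu
      have hlast : u (Fin.last m) = 0 := by
        have hi : (⟨0, hn⟩ : Fin n) = ⟨0, hn⟩ := rfl
        have h0 := congrFun hq (⟨0, hn⟩ : Fin n)
        have hsum : (Q.mulVec u) (⟨0, hn⟩ : Fin n) = u (Fin.last m) := by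
          show (∑ k, Q _ k * u k) = _
          rw [Finset.sum_eq_single (Fin.last m)]
          · have : ¬ ((Fin.last m : Fin (m+1)) : ℕ) < m := by simp [Fin.last]
            simp [hQ, this]
          · intro b _ hb
            have hb' : (b : ℕ) < m := by
              rcases Nat.lt_succ_iff_lt_or_eq.mp b.isLt with h | h
              · exact h
              · exact absurd (by ext; simpa [Fin.last] using h) hb
            rw [hsmall' b hb', mul_zero]
          · simp
        rw [hsum] at h0
        simpa using h0
      funext j
      rcases Nat.lt_succ_iff_lt_or_eq.mp j.isLt with hj | hj
      · exact hsmall' j hj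
      · have : j = Fin.last m := by ext; simpa [Fin.last] using hj
        rw [this, hlast]; rfl
    have h2 : 0 < (Q.mulVec u) ⬝ᵥ (Q.mulVec u) := dot_self_pos hQu0
    have h1 : 0 ≤ (P.mulVec u) ⬝ᵥ (P.mulVec u) := dot_self_nonneg _
    nlinarith
  · have h1 : 0 < (P.mulVec u) ⬝ᵥ (P.mulVec u) := dot_self_pos hPu0
    have h2 : 0 ≤ (Q.mulVec u) ⬝ᵥ (Q.mulVec u) := dot_self_nonneg _
    nlinarith
/-- One step of the majorization penalty method decreases the penalized objective:
if `x ∈ Π^B_{Ω_s}(1_n − Q̄θ)` and `(PᵀP + ρQ̄ᵀQ̄)θ⁺ = ρQ̄ᵀ(1_n − x)`, then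
`F_ρ(θ⁺) − F_ρ(θ) ≤ −(1/2)⟨(PᵀP + ρQᵀQ)(θ⁺ − θ), θ⁺ − θ⟩`, and in particular
`F_ρ(θ⁺) ≤ F_ρ(θ) − (λ_min/2)‖θ⁺ − θ‖²` where `λ_min > 0` is the smallest eigenvalue of
`PᵀP + ρQᵀQ`. -/
theorem stmt_12 (n m s : ℕ) (hn : 0 < n) (hm : 0 < m) (hs : 0 < s) (hsn : s ≤ n)
    (A : Matrix (Fin n) (Fin m) ℝ) (y : Fin n → ℝ) (hy : ∀ i, y i = 1 ∨ y i = -1)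
    (ρ : ℝ) (hρ : 0 < ρ)
    (P : Matrix (Fin m) (Fin (m + 1)) ℝ)
    (hP : ∀ i j, P i j = if (j : ℕ) = (i : ℕ) then 1 else 0)
    (Q : Matrix (Fin n) (Fin (m + 1)) ℝ)
    (hQ : ∀ i j, Q i j = if h : (j : ℕ) < m then A i ⟨j, h⟩ else 1)
    (Qb : Matrix (Fin n) (Fin (m + 1)) ℝ) (hQb : Qb = Matrix.diagonal y * Q)
    (F : (Fin (m + 1) → ℝ) → ℝ)
    (hF : ∀ θ, F θ = (1 / 2) * ‖toEuc (P.mulVec θ)‖ ^ 2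
      + (ρ / 2) * Metric.infDist (toEuc (1 - Qb.mulVec θ)) (Omega n s) ^ 2)
    (θ θp : Fin (m + 1) → ℝ) (x : EuclideanSpace ℝ (Fin n))
    (hx : x ∈ projSet n s (toEuc (1 - Qb.mulVec θ)))
    (hsys : (P.transpose * P + ρ • (Qb.transpose * Qb)).mulVec θp
      = ρ • Qb.transpose.mulVec fun i => 1 - x i) :
    F θp - F θ ≤
        -(1 / 2) * ((θp - θ) ⬝ᵥ ((P.transpose * P + ρ • (Q.transpose * Q)).mulVec (θp - θ))) ∧
      ∃ lam : ℝ, 0 < lam ∧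
        Module.End.HasEigenvalue
          (Matrix.toLin' (P.transpose * P + ρ • (Q.transpose * Q))) lam ∧
        (∀ μ : ℝ, Module.End.HasEigenvalue
          (Matrix.toLin' (P.transpose * P + ρ • (Q.transpose * Q))) μ → lam ≤ μ) ∧
        F θp ≤ F θ - lam / 2 * ‖toEuc (θp - θ)‖ ^ 2 := by
  set c : Fin n → ℝ := fun i => 1 - x i with hc
  have hyy : (fun i => y i * y i) = (1 : Fin n → ℝ) := by
    funext i; rcases hy i with h | h <;> simp [h]
  have hQbQ : Qbᵀ * Qb = Qᵀ * Q := by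
    calc Qbᵀ * Qb = (Qᵀ * (Matrix.diagonal y)ᵀ) * (Matrix.diagonal y * Q) := by
          rw [hQb, Matrix.transpose_mul]
      _ = Qᵀ * ((Matrix.diagonal y * Matrix.diagonal y) * Q) := by
          rw [Matrix.diagonal_transpose, Matrix.mul_assoc, ← Matrix.mul_assoc (Matrix.diagonal y)]
      _ = Qᵀ * Q := by
          rw [Matrix.diagonal_mul_diagonal, hyy]
          rw [show Matrix.diagonal (1 : Fin n → ℝ) = (1 : Matrix (Fin n) (Fin n) ℝ) from Matrix.diagonal_one, Matrix.one_mul]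
  set MQ := Pᵀ * P + ρ • (Qᵀ * Q) with hMQ
  have hsys' : MQ.mulVec θp = ρ • Qbᵀ.mulVec c := by
    rw [hMQ, ← hQbQ]; exact hsys
  have hsymm : MQᵀ = MQ := by
    rw [hMQ, Matrix.transpose_add, Matrix.transpose_smul, Matrix.transpose_mul,
      Matrix.transpose_mul, Matrix.transpose_transpose, Matrix.transpose_transpose]
  have hMQexp : ∀ u : Fin (m+1) → ℝ,
      u ⬝ᵥ MQ.mulVec u = u ⬝ᵥ (Pᵀ * P).mulVec u + ρ * (u ⬝ᵥ (Qᵀ * Q).mulVec u) := by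
    intro u
    rw [hMQ, Matrix.add_mulVec, dotProduct_add, Matrix.smul_mulVec,
      dotProduct_smul, smul_eq_mul]
  have hcw : ∀ u : Fin (m+1) → ℝ, c ⬝ᵥ (Qb.mulVec u) = (Qbᵀ.mulVec c) ⬝ᵥ u := by
    intro u
    rw [Matrix.dotProduct_mulVec, ← Matrix.mulVec_transpose]
  have hGexp : ∀ u : Fin (m+1) → ℝ,
      ‖toEuc (P.mulVec u)‖ ^ 2 + ρ * ‖toEuc (1 - Qb.mulVec u) - x‖ ^ 2
      = u ⬝ᵥ MQ.mulVec u - 2 * ((MQ.mulVec θp) ⬝ᵥ u) + ρ * (c ⬝ᵥ c) := by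
    intro u
    have e1 : ‖toEuc (P.mulVec u)‖ ^ 2 = u ⬝ᵥ (Pᵀ * P).mulVec u := by
      rw [norm_toEuc_sq, dot_PtP]
    have e2 : ‖toEuc (1 - Qb.mulVec u) - x‖ ^ 2
        = c ⬝ᵥ c - 2 * ((Qbᵀ.mulVec c) ⬝ᵥ u) + u ⬝ᵥ (Qᵀ * Q).mulVec u := by
      rw [toEuc_sub, norm_toEuc_sq]
      have h3 : ((1 - Qb.mulVec u) - fun i => x i) = c - Qb.mulVec u := by
        funext i; simp [hc]; ring
      rw [h3, sub_dotProduct, dotProduct_sub, dotProduct_sub,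
        hcw, dotProduct_comm (Qb.mulVec u) c, hcw, ← hQbQ, dot_PtP]
      ring
    have e3 : (MQ.mulVec θp) ⬝ᵥ u = ρ * ((Qbᵀ.mulVec c) ⬝ᵥ u) := by
      rw [hsys', smul_dotProduct, smul_eq_mul]
    rw [e1, e2, e3, hMQexp]
    ring
  have hFθ : F θ = 1/2 * (θ ⬝ᵥ MQ.mulVec θ - 2 * ((MQ.mulVec θp) ⬝ᵥ θ) + ρ * (c ⬝ᵥ c)) := by
    rw [hF θ, ← hx.2]
    have := hGexp θ
    linarith
  have hFθp : F θp ≤ 1/2 * (θp ⬝ᵥ MQ.mulVec θp - 2 * ((MQ.mulVec θp) ⬝ᵥ θp) + ρ * (c ⬝ᵥ c)) := by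
    rw [hF θp]
    have hd : Metric.infDist (toEuc (1 - Qb.mulVec θp)) (Omega n s)
        ≤ ‖toEuc (1 - Qb.mulVec θp) - x‖ := by
      rw [← dist_eq_norm]
      exact Metric.infDist_le_dist_of_mem hx.1
    have hd2 : Metric.infDist (toEuc (1 - Qb.mulVec θp)) (Omega n s) ^ 2
        ≤ ‖toEuc (1 - Qb.mulVec θp) - x‖ ^ 2 :=
      pow_le_pow_left₀ Metric.infDist_nonneg hd 2
    have := hGexp θp
    nlinarith
  have hpart1 : F θp - F θ ≤ -(1 / 2) * ((θp - θ) ⬝ᵥ MQ.mulVec (θp - θ)) := by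
    have hsym1 : θ ⬝ᵥ MQ.mulVec θp = θp ⬝ᵥ MQ.mulVec θ := dot_symm MQ hsymm θ θp
    have hc1 : (MQ.mulVec θp) ⬝ᵥ θp = θp ⬝ᵥ MQ.mulVec θp := dotProduct_comm _ _
    have hc2 : (MQ.mulVec θp) ⬝ᵥ θ = θ ⬝ᵥ MQ.mulVec θp := dotProduct_comm _ _
    have hexp2 : (θp - θ) ⬝ᵥ MQ.mulVec (θp - θ)
        = θp ⬝ᵥ MQ.mulVec θp - θp ⬝ᵥ MQ.mulVec θ - θ ⬝ᵥ MQ.mulVec θp + θ ⬝ᵥ MQ.mulVec θ := by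
      rw [Matrix.mulVec_sub, sub_dotProduct, dotProduct_sub, dotProduct_sub]
      ring
    linarith
  obtain ⟨lam, hlam_pos, hEig, hMin, hQuad⟩ :=
    eigen_min m MQ hsymm (posdef_aux n m hn ρ hρ A P hP Q hQ)
  refine ⟨hpart1, lam, hlam_pos, hEig, hMin, ?_⟩
  have := hQuad (θp - θ)
  linarith
end
end
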